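/- arXiv:1802.03999 — 5 statements merged into one kernel-verified Lean document; each statement's English description precedes it below -/
import Mathlib

section
/- Let K be a finite group with a Kantor family (F, F*) of type (u,v), let A, B be distinct members of F, and set S := A* ∩ B*. If |S| = v, then the product set A·B meets S only in the identity, the map A × B × S → K, (a,b,c) ↦ abc, is injective, and K = A·B·S. -/
/-- A Kantor family of type `(u, v)` in a finite group `K` of order `u² * v`. -/
structure KantorFamily (K : Type*) [Group K] [Fintype K] (u v : ℕ) : Type _ where
  F : Finset (Subgroup K)
  star : Subgroup K → Subgroup K
  two_le_u : 2 ≤ u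
  two_le_v : 2 ≤ v
  card_K : Fintype.card K = u ^ 2 * v
  card_F : F.card = v + 1
  star_injOn : ∀ A ∈ F, ∀ B ∈ F, star A = star B → A = B
  le_star : ∀ A ∈ F, A ≤ star A
  card_mem : ∀ A ∈ F, Nat.card A = u
  card_star : ∀ A ∈ F, Nat.card (star A) = u * v
  prod_inter : ∀ A ∈ F, ∀ B ∈ F, ∀ C ∈ F, A ≠ B → B ≠ C → A ≠ C →
    ∀ g : K, (∃ a ∈ A, ∃ b ∈ B, g = a * b) → g ∈ C → g = 1
  inter_star : ∀ A ∈ F, ∀ B ∈ F, A ≠ B → ∀ g : K, g ∈ A → g ∈ star B → g = 1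

/-- If `S := A* ⊓ B*` has order `v`, then `A·B ∩ S = 1`, the map
`(a, b, c) ↦ a * b * c` is injective on `A × B × S`, and `K = A·B·S`. -/
theorem kantor_family_ABS_factorization
    {K : Type*} [Group K] [Fintype K] {u v : ℕ} (KF : KantorFamily K u v)
    {A B : Subgroup K} (hA : A ∈ KF.F) (hB : B ∈ KF.F) (hAB : A ≠ B)
    (S : Subgroup K) (hS : S = KF.star A ⊓ KF.star B) (hcard : Nat.card S = v) :
    (∀ g : K, (∃ a ∈ A, ∃ b ∈ B, g = a * b) → g ∈ S → g = 1) ∧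
    Function.Injective
      (fun p : A × B × S => (p.1 : K) * (p.2.1 : K) * (p.2.2 : K)) ∧
    (∀ g : K, ∃ a ∈ A, ∃ b ∈ B, ∃ c ∈ S, g = a * b * c) := by
  have hSA : S ≤ KF.star A := hS ▸ inf_le_left
  have hSB : S ≤ KF.star B := hS ▸ inf_le_right
  have hBA : B ≠ A := fun h => hAB h.symm
  have h1 : ∀ g : K, (∃ a ∈ A, ∃ b ∈ B, g = a * b) → g ∈ S → g = 1 := by
    rintro g ⟨a, ha, b, hb, rfl⟩ hg
    have ha1 : a = 1 := by
      refine KF.inter_star A hA B hB hAB a ha ?_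
      have hrw : a = (a * b) * b⁻¹ := by group
      rw [hrw]
      exact mul_mem (hSB hg) (inv_mem (KF.le_star B hB hb))
    subst ha1
    simp only [one_mul] at hg ⊢
    exact KF.inter_star B hB A hA hBA b hb (hSA hg)
  have hinj : Function.Injective
      (fun p : A × B × S => (p.1 : K) * (p.2.1 : K) * (p.2.2 : K)) := by
    rintro ⟨⟨a, ha⟩, ⟨b, hb⟩, ⟨c, hc⟩⟩ ⟨⟨a', ha'⟩, ⟨b', hb'⟩, ⟨c', hc'⟩⟩ h
    simp only at h
    have hx : a'⁻¹ * a * b = b' * c' * c⁻¹ := by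
      calc a'⁻¹ * a * b = a'⁻¹ * (a * b * c) * c⁻¹ := by group
        _ = a'⁻¹ * (a' * b' * c') * c⁻¹ := by rw [h]
        _ = b' * c' * c⁻¹ := by group
    have hxA : a'⁻¹ * a ∈ A := mul_mem (inv_mem ha') ha
    have hxB : a'⁻¹ * a ∈ KF.star B := by
      have hrw : a'⁻¹ * a = (b' * c' * c⁻¹) * b⁻¹ := by rw [← hx]; group
      rw [hrw]
      exact mul_mem (mul_mem (mul_mem (KF.le_star B hB hb') (hSB hc'))
        (inv_mem (hSB hc))) (inv_mem (KF.le_star B hB hb))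
    have haa : a' = a := by
      have := KF.inter_star A hA B hB hAB _ hxA hxB
      rwa [inv_mul_eq_one] at this
    subst haa
    have hbc : b * c = b' * c' := by
      rw [mul_assoc, mul_assoc] at h
      exact mul_left_cancel h
    have hy : b'⁻¹ * b = c' * c⁻¹ := by
      calc b'⁻¹ * b = b'⁻¹ * (b * c) * c⁻¹ := by group
        _ = b'⁻¹ * (b' * c') * c⁻¹ := by rw [hbc]
        _ = c' * c⁻¹ := by group
    have hyB : b'⁻¹ * b ∈ B := mul_mem (inv_mem hb') hb
    have hyA : b'⁻¹ * b ∈ KF.star A := by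
      rw [hy]; exact mul_mem (hSA hc') (inv_mem (hSA hc))
    have hbb : b' = b := by
      have := KF.inter_star B hB A hA hBA _ hyB hyA
      rwa [inv_mul_eq_one] at this
    subst hbb
    have hcc : c = c' := mul_left_cancel hbc
    simp only [Prod.mk.injEq, Subtype.mk.injEq]
    exact ⟨trivial, trivial, hcc⟩
  refine ⟨h1, hinj, ?_⟩
  have hcardeq : Nat.card (A × B × S) = Nat.card K := by
    simp only [Nat.card_prod, KF.card_mem A hA, KF.card_mem B hB, hcard,
      Nat.card_eq_fintype_card, KF.card_K]
    ring
  have hbij : Function.Bijective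
      (fun p : A × B × S => (p.1 : K) * (p.2.1 : K) * (p.2.2 : K)) :=
    (Nat.bijective_iff_injective_and_card _).2 ⟨hinj, hcardeq⟩
  intro g
  obtain ⟨⟨⟨a, ha⟩, ⟨b, hb⟩, ⟨c, hc⟩⟩, hp⟩ := hbij.2 g
  exact ⟨a, ha, b, hb, c, hc, hp.symm⟩
end

section
/- Let K be a group, let Z be a subgroup of the center of K, and let A, B be abelian subgroups of K such that every element of K can be written as a product a·b·z with a ∈ A, b ∈ B, z ∈ Z. Suppose moreover that all commutators of K lie in Z. Then the commutator subgroup [K,K] equals the subgroup generated by the set {[a,b] : a ∈ A, b ∈ B}. -/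
/-!
Since every commutator is central, the commutator map is bimultiplicative and kills the central
factor `Z`. Writing `g = a b z` and `h = a' b' z'`, bimultiplicativity together with the
commutativity of `A` and `B` leaves `⁅g, h⁆ = ⁅b, a'⁆ ⁅a, b'⁆ = ⁅a', b⁆⁻¹ ⁅a, b'⁆ ∈ ⁅A, B⁆`.
-/

open Subgroup
open scoped commutatorElement

section CentralCommutators

variable {G : Type*} [Group G]

theorem commutatorElement_eq_one_of_mem_center_left {z : G} (hz : z ∈ center G) (g : G) :
    ⁅z, g⁆ = 1 :=
  commutatorElement_eq_one_iff_mul_comm.mpr (mem_center_iff.mp hz g).symm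

theorem commutatorElement_eq_one_of_mem_center_right {z : G} (hz : z ∈ center G) (g : G) :
    ⁅g, z⁆ = 1 :=
  commutatorElement_eq_one_iff_mul_comm.mpr (mem_center_iff.mp hz g)

variable (hc : ∀ g h : G, ⁅g, h⁆ ∈ center G)
include hc

theorem commutatorElement_mul_left_of_forall_mem_center (a b c : G) :
    ⁅a * b, c⁆ = ⁅b, c⁆ * ⁅a, c⁆ := by
  rw [commutatorElement_mul_left_eq_conj_mul, mem_center_iff.mp (hc b c), mul_inv_cancel_right]

theorem commutatorElement_mul_right_of_forall_mem_center (a b c : G) :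
    ⁅a, b * c⁆ = ⁅a, b⁆ * ⁅a, c⁆ := by
  rw [commutatorElement_mul_right_eq_mul_conj, mul_assoc _ b, mem_center_iff.mp (hc a c),
    ← mul_assoc, mul_inv_cancel_right]

theorem commutatorElement_mul_mul_mul_mul_of_commute {a b z a' b' z' : G}
    (hz : z ∈ center G) (hz' : z' ∈ center G) (ha : Commute a a') (hb : Commute b b') :
    ⁅a * b * z, a' * b' * z'⁆ = ⁅b, a'⁆ * ⁅a, b'⁆ := by
  simp only [commutatorElement_mul_left_of_forall_mem_center hc,
    commutatorElement_mul_right_of_forall_mem_center hc,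
    commutatorElement_eq_one_of_mem_center_left hz, commutatorElement_eq_one_of_mem_center_right hz',
    commutatorElement_eq_one_iff_commute.mpr ha, commutatorElement_eq_one_iff_commute.mpr hb,
    mul_one, one_mul]

theorem commutator_eq_commutator_of_forall_eq_mul_mul {A B Z : Subgroup G} (hZ : Z ≤ center G)
    (hA : ∀ a ∈ A, ∀ a' ∈ A, Commute a a') (hB : ∀ b ∈ B, ∀ b' ∈ B, Commute b b')
    (hfact : ∀ g : G, ∃ a ∈ A, ∃ b ∈ B, ∃ z ∈ Z, g = a * b * z) :
    commutator G = ⁅A, B⁆ := by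
  refine le_antisymm ?_ (commutator_mono le_top le_top)
  rw [commutator_def, commutator_le]
  rintro g - h -
  obtain ⟨a, ha, b, hb, z, hz, rfl⟩ := hfact g
  obtain ⟨a', ha', b', hb', z', hz', rfl⟩ := hfact h
  rw [commutatorElement_mul_mul_mul_mul_of_commute hc (hZ hz) (hZ hz') (hA a ha a' ha') (hB b hb b' hb'),
    ← commutatorElement_inv]
  exact mul_mem (inv_mem (commutator_mem_commutator ha' hb)) (commutator_mem_commutator ha hb')

end CentralCommutators

theorem closure_setOf_inv_mul_inv_mul_mul_eq_commutator {G : Type*} [Group G] (A B : Subgroup G) :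
    closure {x : G | ∃ a ∈ A, ∃ b ∈ B, x = a⁻¹ * b⁻¹ * a * b} = ⁅A, B⁆ := by
  rw [Subgroup.commutator_def]
  congr 1
  ext x
  constructor
  · rintro ⟨a, ha, b, hb, rfl⟩
    exact ⟨a⁻¹, inv_mem ha, b⁻¹, inv_mem hb, by simp [commutatorElement_def]⟩
  · rintro ⟨a, ha, b, hb, rfl⟩
    exact ⟨a⁻¹, inv_mem ha, b⁻¹, inv_mem hb, by simp [commutatorElement_def]⟩

/-- If `Z ≤ Z(K)`, `A, B` are abelian subgroups with `K = A·B·Z`, and all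
commutators of `K` lie in `Z`, then `[K,K]` is generated by the commutators
`[a,b]` with `a ∈ A`, `b ∈ B`. -/
theorem commutator_subgroup_generated_by_AB {K : Type*} [Group K]
    (Z : Subgroup K) (hZ : Z ≤ Subgroup.center K) (A B : Subgroup K)
    (hAab : ∀ x ∈ A, ∀ y ∈ A, x * y = y * x)
    (hBab : ∀ x ∈ B, ∀ y ∈ B, x * y = y * x)
    (hfact : ∀ g : K, ∃ a ∈ A, ∃ b ∈ B, ∃ z ∈ Z, g = a * b * z)
    (hcomm : ∀ g h : K, g⁻¹ * h⁻¹ * g * h ∈ Z) :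
    commutator K =
      Subgroup.closure {x : K | ∃ a ∈ A, ∃ b ∈ B, x = a⁻¹ * b⁻¹ * a * b} := by
  have hc (g h : K) : ⁅g, h⁆ ∈ center K := by
    simpa [commutatorElement_def] using hZ (hcomm g⁻¹ h⁻¹)
  rw [closure_setOf_inv_mul_inv_mul_mul_eq_commutator]
  exact commutator_eq_commutator_of_forall_eq_mul_mul hc hZ hAab hBab hfact
end

section
/- Let K be a group, let Z ≤ Z(K) be a central subgroup with K/Z abelian, and let A, B be subgroups of K of exponent dividing 2 such that K = A·B·Z. Then the commutator subgroup [K,K] is abelian of exponent dividing 2 (an elementary abelian 2-group if nontrivial). -/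
/-!
Since `K/Z` is abelian and `Z` is central, every commutator is central, so `[K, K]` is abelian
and the commutator map is multiplicative in its first variable. Writing `g = a * b * z`, the
commutator `⁅g, h⁆` equals `⁅a, h⁆ * ⁅b, h⁆`, and `⁅a, h⁆ ^ 2 = ⁅a ^ 2, h⁆ = 1` because
`a ^ 2 = 1`, likewise for `b`. Thus `[K, K]` is generated by central involutions.
-/

open scoped commutatorElement

open Subgroup

section

variable {G : Type*} [Group G]

theorem commutatorElement_mul_left_of_mem_center {a b c : G} (h : ⁅b, c⁆ ∈ center G) :
    ⁅a * b, c⁆ = ⁅a, c⁆ * ⁅b, c⁆ := by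
  rw [commutatorElement_mul_left_eq_conj_mul, mul_assoc a, (mem_center_iff.mp h a⁻¹).symm,
    ← mul_assoc, mul_inv_cancel, one_mul, mem_center_iff.mp h]

theorem commutatorElement_eq_one_of_mem_center {z : G} (hz : z ∈ center G) (c : G) :
    ⁅z, c⁆ = 1 :=
  commutatorElement_eq_one_iff_mul_comm.mpr (mem_center_iff.mp hz c).symm

theorem commutatorElement_sq_eq_one {a c : G} (h : ⁅a, c⁆ ∈ center G) (ha : a ^ 2 = 1) :
    ⁅a, c⁆ ^ 2 = 1 := by
  rw [sq, ← commutatorElement_mul_left_of_mem_center h, ← sq, ha, commutatorElement_one_left]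

theorem sq_eq_one_of_mem_closure_of_central_involutions {S : Set G}
    (hS : ∀ s ∈ S, s ∈ center G ∧ s ^ 2 = 1) {x : G} (hx : x ∈ closure S) : x ^ 2 = 1 := by
  suffices x ∈ center G ∧ x ^ 2 = 1 from this.2
  induction hx using closure_induction with
  | mem s hs => exact hS s hs
  | one => exact ⟨one_mem _, one_pow 2⟩
  | mul x y _ _ hx hy =>
    refine ⟨mul_mem hx.1 hy.1, ?_⟩
    rw [Commute.mul_pow (mem_center_iff.mp hy.1 x), hx.2, hy.2, one_mul]
  | inv x _ hx => exact ⟨inv_mem hx.1, by rw [inv_pow, hx.2, inv_one]⟩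

end

/-- If `Z ≤ Z(K)` with `K/Z` abelian (all commutators in `Z`) and `A, B` are
subgroups of exponent dividing 2 with `K = A·B·Z`, then `[K,K]` is abelian of
exponent dividing 2. -/
theorem commutator_subgroup_elementary_abelian {K : Type*} [Group K]
    (Z : Subgroup K) (hZ : Z ≤ Subgroup.center K)
    (hcomm : ∀ g h : K, g⁻¹ * h⁻¹ * g * h ∈ Z) (A B : Subgroup K)
    (hA2 : ∀ x ∈ A, x ^ 2 = 1) (hB2 : ∀ x ∈ B, x ^ 2 = 1)
    (hfact : ∀ g : K, ∃ a ∈ A, ∃ b ∈ B, ∃ z ∈ Z, g = a * b * z) :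
    (∀ x ∈ commutator K, ∀ y ∈ commutator K, x * y = y * x) ∧
      (∀ x ∈ commutator K, x ^ 2 = 1) := by
  have hcent : ∀ g h : K, ⁅g, h⁆ ∈ center K := fun g h => hZ <| by
    simpa [commutatorElement_def, mul_assoc] using hcomm g⁻¹ h⁻¹
  have hle : commutator K ≤ center K := by
    rw [commutator_eq_closure, closure_le]
    rintro _ ⟨g, h, rfl⟩
    exact hcent g h
  refine ⟨fun x hx y _ => (mem_center_iff.mp (hle hx) y).symm, fun x hx => ?_⟩
  rw [commutator_eq_closure] at hx
  refine sq_eq_one_of_mem_closure_of_central_involutions ?_ hx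
  rintro _ ⟨g, h, rfl⟩
  refine ⟨hcent g h, ?_⟩
  obtain ⟨a, ha, b, hb, z, hz, rfl⟩ := hfact g
  rw [commutatorElement_mul_left_of_mem_center (hcent z h),
    commutatorElement_eq_one_of_mem_center (hZ hz), mul_one,
    commutatorElement_mul_left_of_mem_center (hcent b h),
    Commute.mul_pow (mem_center_iff.mp (hcent b h) ⁅a, h⁆),
    commutatorElement_sq_eq_one (hcent a h) (hA2 a ha),
    commutatorElement_sq_eq_one (hcent b h) (hB2 b hb), one_mul]
end

section
/- Let K be a finite group with a Kantor family (F, F*) of type (u,v). Then the coset geometry Γ(K, F, F*) is a generalized quadrangle of order (u,v). Its points are: a symbol ∞, the left cosets gA* (A ∈ F, g ∈ K), and the elements of K; its lines are: symbols [A] (A ∈ F) and the left cosets gA (A ∈ F, g ∈ K); ∞ is incident with every [A]; [A] is incident with every coset gA*; a coset gA* is incident with a coset hA exactly when hA ⊆ gA*; an element g ∈ K is incident with each coset gA. -/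
open scoped Pointwise

/-- An incidence relation `incid` on points `P` and lines `L` is a generalized
quadrangle of order `(s, t)` if every line is incident with `s + 1` points,
every point is incident with `t + 1` lines, two distinct points are incident
with at most one common line, and for every non-incident point-line pair
`(p, l)` there is a unique pair `(q, m)` with `q` on `l`, `m` through `p`, and
`q` on `m`. -/
def IsGQ {P L : Type*} (incid : P → L → Prop) (s t : ℕ) : Prop :=
  (∀ l : L, Nat.card {p : P // incid p l} = s + 1) ∧
  (∀ p : P, Nat.card {l : L // incid p l} = t + 1) ∧
  (∀ p q : P, p ≠ q → ∀ l m : L, incid p l → incid q l → incid p m →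
      incid q m → l = m) ∧
  (∀ (p : P) (l : L), ¬ incid p l →
      ∃! qm : P × L, incid qm.1 l ∧ incid p qm.2 ∧ incid qm.1 qm.2)

/-- Two points are collinear if some line is incident with both. -/
def GQCollinear {P L : Type*} (incid : P → L → Prop) (p q : P) : Prop :=
  ∃ l : L, incid p l ∧ incid q l


section CosetHelpers
variable {K : Type*} [Group K]

lemma self_mem_coset (H : Subgroup K) (g : K) : g ∈ g • (H : Set K) :=
  (mem_leftCoset_iff g).2 (by simpa using H.one_mem)

lemma coset_eq_of_mem {H : Subgroup K} {g h : K} (hh : h ∈ g • (H : Set K)) :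
    g • (H : Set K) = h • (H : Set K) :=
  (leftCoset_eq_iff H).2 ((mem_leftCoset_iff g).1 hh)

lemma coset_eq_coset {H J : Subgroup K} {g h : K} (hEq : g • (H : Set K) = h • (J : Set K)) :
    H = J := by
  have hh : h ∈ g • (H : Set K) := by rw [hEq]; exact self_mem_coset J h
  have h2 : g • (H : Set K) = h • (H : Set K) := coset_eq_of_mem hh
  have h3 : h • (H : Set K) = h • (J : Set K) := h2 ▸ hEq
  have h4 : (H : Set K) = (J : Set K) := by
    have := congrArg (fun s => h⁻¹ • s) h3
    simpa [inv_smul_smul] using this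
  exact SetLike.coe_injective h4

lemma coset_subset_coset {H J : Subgroup K} {g h : K}
    (hs : h • (H : Set K) ⊆ g • (J : Set K)) :
    (H : Set K) ⊆ (J : Set K) ∧ h ∈ g • (J : Set K) := by
  have hh : h ∈ g • (J : Set K) := hs (self_mem_coset H h)
  have h2 : g • (J : Set K) = h • (J : Set K) := coset_eq_of_mem hh
  refine ⟨?_, hh⟩
  have h3 : h • (H : Set K) ⊆ h • (J : Set K) := h2 ▸ hs
  intro x hx
  have : h * x ∈ h • (J : Set K) := h3 ⟨x, hx, rfl⟩
  simpa using (mem_leftCoset_iff h).1 this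

end CosetHelpers

section KFHelpers
variable {K : Type*} [Group K] [Fintype K] {u v : ℕ} (KF : KantorFamily K u v)

include KF in
lemma KF_u_pos : 0 < u := lt_of_lt_of_le two_pos KF.two_le_u
include KF in
lemma KF_v_pos : 0 < v := lt_of_lt_of_le two_pos KF.two_le_v

lemma KF_exists_ne_one {A : Subgroup K} (hA : A ∈ KF.F) : ∃ a ∈ A, a ≠ 1 := by
  by_contra h
  push_neg at h
  have : A = ⊥ := (Subgroup.eq_bot_iff_forall A).2 h
  have hc := KF.card_mem A hA
  rw [this, Subgroup.card_bot] at hc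
  have := KF.two_le_u
  omega

/-- If `A ⊆ B*` (A, B ∈ F) then `A = B`. -/
lemma KF_sub_star_eq {A B : Subgroup K} (hA : A ∈ KF.F) (hB : B ∈ KF.F)
    (hs : (A : Set K) ⊆ (KF.star B : Set K)) : A = B := by
  by_contra hne
  obtain ⟨a, haA, ha1⟩ := KF_exists_ne_one KF hA
  exact ha1 (KF.inter_star A hA B hB hne a haA (hs haA))

/-- A coset of `A` contained in a coset of `B*` forces `A = B`. -/
lemma KF_coset_subset_star {A B : Subgroup K} (hA : A ∈ KF.F) (hB : B ∈ KF.F)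
    {g h : K} (hs : h • (A : Set K) ⊆ g • (KF.star B : Set K)) :
    A = B ∧ h ∈ g • (KF.star B : Set K) ∧ g • (KF.star B : Set K) = h • (KF.star B : Set K) := by
  obtain ⟨h1, h2⟩ := coset_subset_coset hs
  exact ⟨KF_sub_star_eq KF hA hB h1, h2, coset_eq_of_mem h2⟩

/-- Star cosets that coincide as sets have the same `A`. -/
lemma KF_star_coset_eq {A B : Subgroup K} (hA : A ∈ KF.F) (hB : B ∈ KF.F) {g h : K}
    (hEq : g • (KF.star A : Set K) = h • (KF.star B : Set K)) : A = B :=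
  KF.star_injOn A hA B hB (coset_eq_coset hEq)

end KFHelpers

section KFCounting
variable {K : Type*} [Group K] [Fintype K] {u v : ℕ} (KF : KantorFamily K u v)

lemma mul_eq_mul_shift {K : Type*} [Group K] {x y x' y' : K} (h : x * y = x' * y') :
    x'⁻¹ * x = y' * y⁻¹ := by
  calc x'⁻¹ * x = x'⁻¹ * (x * y) * y⁻¹ := by group
  _ = x'⁻¹ * (x' * y') * y⁻¹ := by rw [h]
  _ = y' * y⁻¹ := by group

include KF in
lemma KF_card_K' : Nat.card K = u ^ 2 * v := by
  rw [Nat.card_eq_fintype_card]; exact KF.card_K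

lemma KF_index_star {A : Subgroup K} (hA : A ∈ KF.F) : (KF.star A).index = u := by
  have h := Subgroup.card_mul_index (KF.star A)
  rw [KF.card_star A hA, KF_card_K' KF] at h
  have : u * v * (KF.star A).index = u * v * u := by rw [h]; ring
  exact Nat.eq_of_mul_eq_mul_left (Nat.mul_pos (KF_u_pos KF) (KF_v_pos KF)) this

lemma KF_index_subgroupOf {A : Subgroup K} (hA : A ∈ KF.F) :
    (A.subgroupOf (KF.star A)).index = v := by
  have h := Subgroup.card_mul_index (A.subgroupOf (KF.star A))
  have e : Nat.card (A.subgroupOf (KF.star A)) = Nat.card A :=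
    Nat.card_congr (Subgroup.subgroupOfEquivOfLe (KF.le_star A hA)).toEquiv
  rw [e, KF.card_mem A hA, KF.card_star A hA] at h
  exact Nat.eq_of_mul_eq_mul_left (KF_u_pos KF) h

/-- `K = B · A*` for distinct `A, B ∈ F`. -/
lemma KF_decomp {A B : Subgroup K} (hA : A ∈ KF.F) (hB : B ∈ KF.F) (hne : B ≠ A)
    (w : K) : ∃ b ∈ B, ∃ s ∈ KF.star A, w = b * s := by
  classical
  set f : B × (KF.star A) → K := fun p => (p.1 : K) * (p.2 : K) with hf
  have hinj : Function.Injective f := by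
    rintro ⟨⟨b, hb⟩, ⟨s, hs⟩⟩ ⟨⟨b', hb'⟩, ⟨s', hs'⟩⟩ h
    simp only [hf] at h
    have key : b'⁻¹ * b = s' * s⁻¹ := mul_eq_mul_shift h
    have h1 : b'⁻¹ * b ∈ B := mul_mem (inv_mem hb') hb
    have h2 : b'⁻¹ * b ∈ KF.star A := key ▸ mul_mem hs' (inv_mem hs)
    have h3 : b'⁻¹ * b = 1 := KF.inter_star B hB A hA hne _ h1 h2
    have hbb : b = b' := by
      have := congrArg (fun z => b' * z) h3; simpa [mul_assoc] using this
    have hss : s = s' := by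
      have h4 : s' * s⁻¹ = 1 := by rw [← key, h3]
      have := congrArg (fun z => z * s) h4; simpa [mul_assoc] using this.symm
    simp [Prod.ext_iff, Subtype.ext_iff, hbb, hss]
  have hcard : Nat.card (B × (KF.star A)) = Nat.card K := by
    rw [Nat.card_prod, KF.card_mem B hB, KF.card_star A hA, KF_card_K' KF]; ring
  have hbij : Function.Bijective f :=
    (Nat.bijective_iff_injective_and_card f).2 ⟨hinj, hcard⟩
  obtain ⟨⟨⟨b, hb⟩, ⟨s, hs⟩⟩, hws⟩ := hbij.surjective w
  exact ⟨b, hb, s, hs, hws.symm⟩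

/-- Unique intersection point of a `B`-coset and an `A*`-coset for `B ≠ A`. -/
lemma KF_inter_star_unique {A B : Subgroup K} (hA : A ∈ KF.F) (hB : B ∈ KF.F)
    (hne : B ≠ A) {g h x y : K}
    (hx1 : x ∈ h • (B : Set K)) (hx2 : x ∈ g • (KF.star A : Set K))
    (hy1 : y ∈ h • (B : Set K)) (hy2 : y ∈ g • (KF.star A : Set K)) : x = y := by
  have hb1 : h⁻¹ * x ∈ B := (mem_leftCoset_iff h).1 hx1
  have hb2 : h⁻¹ * y ∈ B := (mem_leftCoset_iff h).1 hy1
  have hs1 : g⁻¹ * x ∈ KF.star A := (mem_leftCoset_iff g).1 hx2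
  have hs2 : g⁻¹ * y ∈ KF.star A := (mem_leftCoset_iff g).1 hy2
  have e1 : (h⁻¹ * x)⁻¹ * (h⁻¹ * y) = x⁻¹ * y := by group
  have e2 : (g⁻¹ * x)⁻¹ * (g⁻¹ * y) = x⁻¹ * y := by group
  have m1 : x⁻¹ * y ∈ B := e1 ▸ mul_mem (inv_mem hb1) hb2
  have m2 : x⁻¹ * y ∈ KF.star A := e2 ▸ mul_mem (inv_mem hs1) hs2
  have : x⁻¹ * y = 1 := KF.inter_star B hB A hA hne _ m1 m2
  have := congrArg (fun z => x * z) this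
  simpa [mul_assoc] using this.symm

lemma KF_cover_unique {B : Subgroup K} (hB : B ∈ KF.F) {w : K} (hw : w ∉ KF.star B)
    {C C' : Subgroup K} (hC : C ∈ KF.F) (hC' : C' ∈ KF.F) {b b' : K}
    (hb : b ∈ B) (hb' : b' ∈ B) (h1 : w * b ∈ C) (h2 : w * b' ∈ C') :
    C = C' ∧ b = b' := by
  have hCB : C ≠ B := by
    rintro rfl
    exact hw (KF.le_star C hC (by simpa using mul_mem h1 (inv_mem hb)))
  have hC'B : C' ≠ B := by
    rintro rfl
    exact hw (KF.le_star C' hC' (by simpa using mul_mem h2 (inv_mem hb')))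
  have key : (w * b')⁻¹ * (w * b) = b'⁻¹ * b := by group
  have hmemB : (w * b')⁻¹ * (w * b) ∈ B := key ▸ mul_mem (inv_mem hb') hb
  by_cases hCC' : C = C'
  · subst hCC'
    refine ⟨rfl, ?_⟩
    have hmemC : (w * b')⁻¹ * (w * b) ∈ C := mul_mem (inv_mem h2) h1
    have h3 : (w * b')⁻¹ * (w * b) = 1 :=
      KF.inter_star B hB C hC (Ne.symm hCB) _ hmemB (KF.le_star C hC hmemC)
    rw [key] at h3
    have := congrArg (fun z => b' * z) h3
    simpa [mul_assoc] using this
  · exfalso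
    have h3 : (w * b')⁻¹ * (w * b) = 1 := by
      refine KF.prod_inter C' hC' C hC B hB (Ne.symm hCC') hCB hC'B _
        ⟨(w * b')⁻¹, inv_mem h2, (w * b), h1, rfl⟩ hmemB
    have hbb : b = b' := by
      rw [key] at h3
      have := congrArg (fun z => b' * z) h3
      simpa [mul_assoc] using this
    subst hbb
    have heq : w * b ∈ C' := h2
    have : w * b = 1 := KF.inter_star C hC C' hC' hCC' _ h1 (KF.le_star C' hC' heq)
    have hwB : w ∈ B := by
      have hwe : w = b⁻¹ := mul_eq_one_iff_eq_inv.mp this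
      rw [hwe]; exact inv_mem hb
    exact hw (KF.le_star B hB hwB)

end KFCounting

section KFCover
variable {K : Type*} [Group K] [Fintype K] {u v : ℕ} (KF : KantorFamily K u v)

lemma KF_cover_exists {B : Subgroup K} (hB : B ∈ KF.F) {w : K} (hw : w ∉ KF.star B) :
    ∃ C ∈ KF.F, ∃ b ∈ B, w * b ∈ C := by
  classical
  set D := Σ C : {C : Subgroup K // C ∈ KF.F.erase B},
      ({c : C.1 // (c : K) ≠ 1} × B) with hD
  have hmem : ∀ (C : Subgroup K), C ∈ KF.F.erase B → ∀ c : K, c ∈ C → c ≠ 1 →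
      ∀ b : K, b ∈ B → c * b ∉ KF.star B := by
    intro C hC c hc hc1 b hb hmem
    have hCF : C ∈ KF.F := Finset.mem_of_mem_erase hC
    have hCB : C ≠ B := Finset.ne_of_mem_erase hC
    have : c ∈ KF.star B := by
      have h2 : c * b * b⁻¹ ∈ KF.star B := mul_mem hmem (inv_mem (KF.le_star B hB hb))
      simpa [mul_assoc] using h2
    exact hc1 (KF.inter_star C hCF B hB hCB c hc this)
  set f : D → {x : K // x ∉ KF.star B} := fun p =>
    ⟨(p.2.1.1 : K) * (p.2.2 : K),
      hmem p.1.1 p.1.2 p.2.1.1 p.2.1.1.2 p.2.1.2 p.2.2 p.2.2.2⟩ with hf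
  have hinj : Function.Injective f := by
    rintro ⟨C, ⟨⟨c, hcC⟩, hc1⟩, ⟨b, hbB⟩⟩ ⟨C', ⟨⟨c', hcC'⟩, hc1'⟩, ⟨b', hbB'⟩⟩ heq
    have hval : c * b = c' * b' := congrArg Subtype.val heq
    have key : c'⁻¹ * c = b' * b⁻¹ := mul_eq_mul_shift hval
    have hkeyB : c'⁻¹ * c ∈ B := key ▸ mul_mem hbB' (inv_mem hbB)
    have hCF : C.1 ∈ KF.F := Finset.mem_of_mem_erase C.2
    have hCB : C.1 ≠ B := Finset.ne_of_mem_erase C.2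
    have hCF' : C'.1 ∈ KF.F := Finset.mem_of_mem_erase C'.2
    have hCB' : C'.1 ≠ B := Finset.ne_of_mem_erase C'.2
    have hCC' : C = C' := by
      by_contra hne
      have hne1 : C'.1 ≠ C.1 := fun h => hne (Subtype.ext h.symm)
      have g1 : c'⁻¹ * c = 1 :=
        KF.prod_inter C'.1 hCF' C.1 hCF B hB hne1 hCB hCB' _
          ⟨c'⁻¹, inv_mem hcC', c, hcC, rfl⟩ hkeyB
      have hcc : c' = c := inv_mul_eq_one.mp g1
      have hcC'2 : c ∈ KF.star C'.1 := KF.le_star C'.1 hCF' (hcc ▸ hcC')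
      exact hc1 (KF.inter_star C.1 hCF C'.1 hCF' (Ne.symm hne1) c hcC hcC'2)
    subst hCC'
    have hmemC : c'⁻¹ * c ∈ C.1 := mul_mem (inv_mem hcC') hcC
    have g1 : c'⁻¹ * c = 1 :=
      KF.inter_star B hB C.1 hCF (Ne.symm hCB) _ hkeyB (KF.le_star C.1 hCF hmemC)
    have hcc : c' = c := inv_mul_eq_one.mp g1
    have g2 : b' * b⁻¹ = 1 := key ▸ g1
    have hbb : b' = b := mul_inv_eq_one.mp g2
    subst hcc; subst hbb
    rfl
  have hcardD : Nat.card D = v * ((u - 1) * u) := by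
    rw [Nat.card_eq_fintype_card, Fintype.card_sigma]
    have hfib : ∀ C : {C : Subgroup K // C ∈ KF.F.erase B},
        Fintype.card ({c : C.1 // (c : K) ≠ 1} × B) = (u - 1) * u := by
      intro C
      have hCF : C.1 ∈ KF.F := Finset.mem_of_mem_erase C.2
      rw [Fintype.card_prod]
      have hone : Fintype.card {c : C.1 // (c : K) = 1} = 1 :=
        Fintype.card_eq_one_iff.2
          ⟨⟨⟨1, one_mem _⟩, rfl⟩, by rintro ⟨⟨x, hx⟩, h⟩; exact Subtype.ext (Subtype.ext h)⟩
      have hC : Fintype.card C.1 = u := by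
        rw [← Nat.card_eq_fintype_card]; exact KF.card_mem C.1 hCF
      have h1 : Fintype.card {c : C.1 // (c : K) ≠ 1} = u - 1 := by
        have h2 := Fintype.card_subtype_compl (fun c : C.1 => (c : K) = 1)
        rw [hone, hC] at h2
        simpa using h2
      have h2 : Fintype.card B = u := by
        rw [← Nat.card_eq_fintype_card]; exact KF.card_mem B hB
      rw [h1, h2]
    rw [Finset.sum_congr rfl (fun C _ => hfib C), Finset.sum_const, smul_eq_mul]
    congr 1
    rw [Finset.card_univ, Fintype.card_coe, Finset.card_erase_of_mem hB, KF.card_F]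
    omega
  have hcardT : Nat.card {x : K // x ∉ KF.star B} = u ^ 2 * v - u * v := by
    rw [Nat.card_eq_fintype_card]
    have h2 := Fintype.card_subtype_compl (fun x : K => x ∈ KF.star B)
    have h3 : Fintype.card {x : K // x ∈ KF.star B} = u * v := by
      rw [← Nat.card_eq_fintype_card]; exact KF.card_star B hB
    rw [h3, KF.card_K] at h2
    simpa using h2
  have harith : v * ((u - 1) * u) = u ^ 2 * v - u * v := by
    obtain ⟨k, rfl⟩ : ∃ k, u = k + 1 := ⟨u - 1, by have := KF.two_le_u; omega⟩
    have : (k + 1) ^ 2 * v = v * ((k + 1 - 1) * (k + 1)) + (k + 1) * v := by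
      simp only [Nat.add_sub_cancel]; ring
    omega
  have hbij : Function.Bijective f :=
    (Nat.bijective_iff_injective_and_card f).2 ⟨hinj, by rw [hcardD, hcardT, harith]⟩
  obtain ⟨⟨C, ⟨⟨c, hc⟩, hc1⟩, ⟨b, hb⟩⟩, hfw⟩ := hbij.surjective ⟨w, hw⟩
  have hw' : c * b = w := congrArg Subtype.val hfw
  refine ⟨C.1, Finset.mem_of_mem_erase C.2, b⁻¹, inv_mem hb, ?_⟩
  have : w * b⁻¹ = c := by rw [← hw']; group
  rw [this]; exact hc
end KFCover

section MoreHelpers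
variable {K : Type*} [Group K] [Fintype K] {u v : ℕ} (KF : KantorFamily K u v)

/-- The number of left cosets of `H` (as sets) is the index of `H`. -/
lemma card_cosets (H : Subgroup K) :
    Nat.card {S : Set K // ∃ g : K, S = g • (H : Set K)} = H.index := by
  rw [Subgroup.index_eq_card]
  refine (Nat.card_congr (Equiv.ofBijective ?_ ⟨?_, ?_⟩)).symm
  · exact fun q => Quotient.liftOn' q (fun g => ⟨g • (H : Set K), g, rfl⟩)
      (fun g g' hgg' => Subtype.ext ((leftCoset_eq_iff H).2
        (QuotientGroup.leftRel_apply.1 hgg')))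
  · intro q q'
    refine Quotient.inductionOn₂' q q' (fun g g' h => ?_)
    have hval : g • (H : Set K) = g' • (H : Set K) := congrArg Subtype.val h
    exact Quotient.sound' (QuotientGroup.leftRel_apply.2 ((leftCoset_eq_iff H).1 hval))
  · rintro ⟨S, g, rfl⟩
    exact ⟨Quotient.mk'' g, rfl⟩

lemma KF_mem_inter_eq {C C' : Subgroup K} (hC : C ∈ KF.F) (hC' : C' ∈ KF.F)
    {z : K} (h1 : z ∈ C) (h2 : z ∈ C') (hz : z ≠ 1) : C = C' := by
  by_contra hne
  exact hz (KF.inter_star C hC C' hC' hne z h1 (KF.le_star C' hC' h2))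

lemma coset_sub_star_self {A : Subgroup K} (hA : A ∈ KF.F) (g : K) :
    g • (A : Set K) ⊆ g • (KF.star A : Set K) :=
  Set.smul_set_mono (SetLike.coe_subset_coe.2 (KF.le_star A hA))

lemma coset_sub_star_of_mem {A : Subgroup K} (hA : A ∈ KF.F) {g x : K}
    (hx : x ∈ g • (KF.star A : Set K)) :
    x • (A : Set K) ⊆ g • (KF.star A : Set K) := by
  rw [coset_eq_of_mem hx]
  exact coset_sub_star_self KF hA x

/-- A coset line inside two star-cosets forces the star-cosets to coincide. -/
lemma KF_coset_line_star_unique {Tval Sval S'val : Set K}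
    (hT : ∃ B ∈ KF.F, ∃ h : K, Tval = h • (B : Set K))
    {A A' : Subgroup K} (hA : A ∈ KF.F) (hA' : A' ∈ KF.F) {g g' : K}
    (hS : Sval = g • (KF.star A : Set K)) (hS' : S'val = g' • (KF.star A' : Set K))
    (h1 : Tval ⊆ Sval) (h2 : Tval ⊆ S'val) : Sval = S'val := by
  obtain ⟨B, hB, h, rfl⟩ := hT
  rw [hS] at h1; rw [hS'] at h2
  obtain ⟨e1, -, e2⟩ := KF_coset_subset_star KF hB hA h1
  obtain ⟨e3, -, e4⟩ := KF_coset_subset_star KF hB hA' h2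
  rw [hS, hS', e2, e4, ← e1, ← e3]

/-- A coset line through `x` inside the star coset `g • A*` must be `x • A`. -/
lemma KF_coset_line_eq {Tval : Set K}
    (hT : ∃ B ∈ KF.F, ∃ h : K, Tval = h • (B : Set K))
    {A : Subgroup K} (hA : A ∈ KF.F) {g x : K}
    (h1 : Tval ⊆ g • (KF.star A : Set K)) (h2 : x ∈ Tval) :
    Tval = x • (A : Set K) ∧ x ∈ g • (KF.star A : Set K) := by
  obtain ⟨B, hB, h, rfl⟩ := hT
  obtain ⟨e1, -, -⟩ := KF_coset_subset_star KF hB hA h1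
  subst e1
  exact ⟨coset_eq_of_mem h2, h1 h2⟩

end MoreHelpers

/-- The coset geometry of a Kantor family of type `(u,v)` is a generalized
quadrangle of order `(u,v)`.  Points: the symbol `∞` (`Sum.inl ()`), the left
cosets `g • A*` for `A ∈ F` (`Sum.inr (Sum.inl _)`), and the elements of `K`
(`Sum.inr (Sum.inr _)`).  Lines: the symbols `[A]` for `A ∈ F` (`Sum.inl _`),
and the left cosets `g • A` for `A ∈ F` (`Sum.inr _`). -/
theorem kantor_family_coset_geometry_isGQ
    {K : Type*} [Group K] [Fintype K] {u v : ℕ} (KF : KantorFamily K u v) :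
    IsGQ
      (P := Unit ⊕ {S : Set K // ∃ A ∈ KF.F, ∃ g : K, S = g • (KF.star A : Set K)} ⊕ K)
      (L := {A : Subgroup K // A ∈ KF.F} ⊕ {S : Set K // ∃ A ∈ KF.F, ∃ g : K, S = g • (A : Set K)})
      (fun p l =>
        match p, l with
        | Sum.inl _, Sum.inl _ => True                                -- ∞ I [A]
        | Sum.inl _, Sum.inr _ => False
        | Sum.inr (Sum.inl S), Sum.inl A =>                           -- gA* I [A]
            ∃ g : K, (S : Set K) = g • ((KF.star (A : Subgroup K)) : Set K)
        | Sum.inr (Sum.inl S), Sum.inr T => (T : Set K) ⊆ (S : Set K) -- hA ⊆ gA*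
        | Sum.inr (Sum.inr _), Sum.inl _ => False
        | Sum.inr (Sum.inr g), Sum.inr T => g ∈ (T : Set K))          -- g ∈ gA
      u v := by
  classical
  refine ⟨?_, ?_, ?_, ?_⟩
  · -- every line has u + 1 points
    rintro (⟨A, hA⟩ | ⟨T, hT⟩)
    · -- line [A]
      have e1 : Nat.card (Unit ⊕ {S : Set K // ∃ g : K, S = g • (KF.star A : Set K)})
          = u + 1 := by
        rw [Nat.card_sum, card_cosets, KF_index_star KF hA, Nat.card_unique]
        omega
      rw [← e1]
      refine (Nat.card_eq_of_bijective
        (Sum.elim (fun _ => ⟨Sum.inl (), trivial⟩)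
          (fun S => ⟨Sum.inr (Sum.inl ⟨S.1, A, hA, S.2⟩), S.2⟩)) ⟨?_, ?_⟩).symm
      · rintro (⟨⟩ | ⟨S, hS⟩) (⟨⟩ | ⟨S', hS'⟩) h
        · rfl
        · exact absurd (congrArg Subtype.val h) (by simp)
        · exact absurd (congrArg Subtype.val h) (by simp)
        · have := congrArg Subtype.val h
          simp only [Sum.elim_inr, Sum.inr.injEq, Sum.inl.injEq, Subtype.mk.injEq] at this
          exact congrArg Sum.inr (Subtype.ext this)
      · rintro ⟨(⟨⟩ | (S | x)), hp⟩
        · exact ⟨Sum.inl (), rfl⟩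
        · exact ⟨Sum.inr ⟨S.1, hp⟩, by simp⟩
        · exact hp.elim
    · -- coset line T = g0 • A
      obtain ⟨A, hA, g0, rfl⟩ := hT
      have e1 : Nat.card (Unit ⊕ ↥(g0 • (A : Set K))) = u + 1 := by
        rw [Nat.card_sum, Nat.card_unique, Set.natCard_smul_set]
        have : Nat.card ↥(A : Set K) = u := KF.card_mem A hA
        omega
      rw [← e1]
      refine (Nat.card_eq_of_bijective
        (Sum.elim
          (fun _ => ⟨Sum.inr (Sum.inl ⟨g0 • (KF.star A : Set K), A, hA, g0, rfl⟩),
            coset_sub_star_self KF hA g0⟩)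
          (fun x => ⟨Sum.inr (Sum.inr x.1), x.2⟩)) ⟨?_, ?_⟩).symm
      · rintro (⟨⟩ | ⟨x, hx⟩) (⟨⟩ | ⟨x', hx'⟩) h
        · rfl
        · exact absurd (congrArg Subtype.val h) (by simp)
        · exact absurd (congrArg Subtype.val h) (by simp)
        · have := congrArg Subtype.val h
          simp only [Sum.elim_inr, Sum.inr.injEq] at this
          exact congrArg Sum.inr (Subtype.ext this)
      · rintro ⟨(⟨⟩ | (S | x)), hp⟩
        · exact hp.elim
        · refine ⟨Sum.inl (), ?_⟩
          obtain ⟨B, hB, g, hSval⟩ := S.2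
          have hp' : g0 • (A : Set K) ⊆ g • (KF.star B : Set K) := by
            rw [← hSval]; exact hp
          obtain ⟨hAB, -, hEq⟩ := KF_coset_subset_star KF hA hB hp'
          subst hAB
          refine Subtype.ext (congrArg Sum.inr (congrArg Sum.inl (Subtype.ext ?_)))
          rw [hSval, hEq]
        · exact ⟨Sum.inr ⟨x, hp⟩, rfl⟩
  · -- every point is on v + 1 lines
    rintro (⟨⟩ | (⟨Sval, hS⟩ | x))
    · -- the point ∞
      have e1 : Nat.card {A : Subgroup K // A ∈ KF.F} = v + 1 := by
        rw [Nat.card_eq_fintype_card, Fintype.card_coe]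
        exact KF.card_F
      rw [← e1]
      refine (Nat.card_eq_of_bijective (fun A => ⟨Sum.inl A, trivial⟩) ⟨?_, ?_⟩).symm
      · intro A B h
        have := congrArg Subtype.val h
        simpa [Sum.inl.injEq] using this
      · rintro ⟨(B | T), hm⟩
        · exact ⟨B, rfl⟩
        · exact hm.elim
    · -- a star coset point g • A*
      obtain ⟨A, hA, g, rfl⟩ := hS
      have e1 : Nat.card (Unit ⊕ (KF.star A ⧸ (A.subgroupOf (KF.star A)))) = v + 1 := by
        rw [Nat.card_sum, Nat.card_unique, ← Subgroup.index_eq_card,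
          KF_index_subgroupOf KF hA]
        omega
      rw [← e1]
      have hsub : ∀ a : KF.star A, (g * (a : K)) • (A : Set K) ⊆ g • (KF.star A : Set K) := by
        intro a
        refine coset_sub_star_of_mem KF hA ?_
        exact (mem_leftCoset_iff g).2 (by simpa using a.2)
      refine (Nat.card_eq_of_bijective
        (Sum.elim
          (fun _ => ⟨Sum.inl ⟨A, hA⟩, g, rfl⟩)
          (fun q => Quotient.liftOn' q
            (fun a => ⟨Sum.inr ⟨(g * (a : K)) • (A : Set K), A, hA, g * (a : K), rfl⟩,
              hsub a⟩)
            (fun a b hab => by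
              refine Subtype.ext (congrArg Sum.inr (Subtype.ext ?_))
              have h1 : ((a : K))⁻¹ * (b : K) ∈ A := by
                have := QuotientGroup.leftRel_apply.1 hab
                simpa [Subgroup.mem_subgroupOf] using this
              refine (leftCoset_eq_iff A).2 ?_
              have : (g * (a : K))⁻¹ * (g * (b : K)) = ((a : K))⁻¹ * (b : K) := by group
              rw [this]; exact h1))) ⟨?_, ?_⟩).symm
      · rintro (⟨⟩ | q) (⟨⟩ | q') h
        · rfl
        · refine absurd (congrArg Subtype.val h) ?_
          refine Quotient.inductionOn' q' (fun a => ?_)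
          simp
        · refine absurd (congrArg Subtype.val h) ?_
          refine Quotient.inductionOn' q (fun a => ?_)
          simp
        · refine congrArg Sum.inr ?_
          refine Quotient.inductionOn₂' q q' (fun a b hab => ?_) h
          have hval : (g * (a : K)) • (A : Set K) = (g * (b : K)) • (A : Set K) := by
            have := congrArg Subtype.val hab
            simpa using congrArg (fun z => match z with
              | Sum.inr T => (T : Set K)
              | Sum.inl _ => ∅) this
          have h1 : (g * (a : K))⁻¹ * (g * (b : K)) ∈ A := (leftCoset_eq_iff A).1 hval
          have h2 : ((a : K))⁻¹ * (b : K) ∈ A := by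
            have e : (g * (a : K))⁻¹ * (g * (b : K)) = ((a : K))⁻¹ * (b : K) := by group
            rwa [e] at h1
          exact Quotient.sound' (QuotientGroup.leftRel_apply.2
            (by simpa [Subgroup.mem_subgroupOf] using h2))
      · rintro ⟨(⟨B, hB⟩ | ⟨Tval, hT⟩), hm⟩
        · obtain ⟨g', hg'⟩ := hm
          have hAB : A = B := KF_star_coset_eq KF hA hB hg'
          subst hAB
          exact ⟨Sum.inl (), rfl⟩
        · obtain ⟨B, hB, h, hTval⟩ := hT
          have hm' : h • (B : Set K) ⊆ g • (KF.star A : Set K) := by rw [← hTval]; exact hm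
          obtain ⟨hBA, hmem, -⟩ := KF_coset_subset_star KF hB hA hm'
          subst hBA
          have ha0 : g⁻¹ * h ∈ KF.star B := (mem_leftCoset_iff g).1 hmem
          refine ⟨Sum.inr (Quotient.mk'' ⟨g⁻¹ * h, ha0⟩), ?_⟩
          refine Subtype.ext (congrArg Sum.inr (Subtype.ext ?_))
          show (g * (g⁻¹ * h)) • (B : Set K) = Tval
          rw [hTval]
          congr 1
          group
    · -- an element x of K
      have e1 : Nat.card {A : Subgroup K // A ∈ KF.F} = v + 1 := by
        rw [Nat.card_eq_fintype_card, Fintype.card_coe]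
        exact KF.card_F
      rw [← e1]
      refine (Nat.card_eq_of_bijective
        (fun A => ⟨Sum.inr ⟨x • (A.1 : Set K), A.1, A.2, x, rfl⟩,
          self_mem_coset A.1 x⟩) ⟨?_, ?_⟩).symm
      · rintro ⟨A, hA⟩ ⟨B, hB⟩ h
        have := congrArg Subtype.val h
        simp only [Sum.inr.injEq, Subtype.mk.injEq] at this
        exact Subtype.ext (coset_eq_coset this)
      · rintro ⟨(⟨B, hB⟩ | ⟨Tval, hT⟩), hm⟩
        · exact hm.elim
        · obtain ⟨B, hB, h, hTval⟩ := hT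
          refine ⟨⟨B, hB⟩, ?_⟩
          refine Subtype.ext (congrArg Sum.inr (Subtype.ext ?_))
          have hx : x ∈ h • (B : Set K) := by rw [← hTval]; exact hm
          show x • (B : Set K) = Tval
          rw [hTval]
          exact (coset_eq_of_mem hx).symm
  · -- two distinct points lie on at most one common line
    rintro (⟨⟩ | (⟨Sval, hS⟩ | x)) (⟨⟩ | (⟨S'val, hS'⟩ | y)) hpq
      (⟨A, hA⟩ | ⟨Tval, hT⟩) (⟨B, hB⟩ | ⟨T'val, hT'⟩) hpl hql hpm hqm
    -- p = ∞, q = ∞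
    · exact absurd rfl hpq
    · exact absurd rfl hpq
    · exact absurd rfl hpq
    · exact absurd rfl hpq
    -- p = ∞, q = S'
    · obtain ⟨gq, hgq⟩ := (hql : ∃ g : K, S'val = g • (KF.star A : Set K))
      obtain ⟨gm, hgm⟩ := (hqm : ∃ g : K, S'val = g • (KF.star B : Set K))
      exact congrArg Sum.inl (Subtype.ext (KF_star_coset_eq KF hA hB (hgq.symm.trans hgm)))
    · exact ((hpm : False)).elim
    · exact ((hpl : False)).elim
    · exact ((hpl : False)).elim
    -- p = ∞, q = y
    · exact ((hql : False)).elim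
    · exact ((hpm : False)).elim
    · exact ((hpl : False)).elim
    · exact ((hpl : False)).elim
    -- p = S, q = ∞
    · obtain ⟨gq, hgq⟩ := (hpl : ∃ g : K, Sval = g • (KF.star A : Set K))
      obtain ⟨gm, hgm⟩ := (hpm : ∃ g : K, Sval = g • (KF.star B : Set K))
      exact congrArg Sum.inl (Subtype.ext (KF_star_coset_eq KF hA hB (hgq.symm.trans hgm)))
    · exact ((hqm : False)).elim
    · exact ((hql : False)).elim
    · exact ((hql : False)).elim
    -- p = S, q = S'
    · obtain ⟨A0, hA0, g0, rfl⟩ := hS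
      obtain ⟨A1, hA1, g1, rfl⟩ := hS'
      obtain ⟨ga, hga⟩ := (hpl : ∃ g : K, g0 • (KF.star A0 : Set K) = g • (KF.star A : Set K))
      obtain ⟨gb, hgb⟩ := (hpm : ∃ g : K, g0 • (KF.star A0 : Set K) = g • (KF.star B : Set K))
      have e1 : A0 = A := KF_star_coset_eq KF hA0 hA hga
      have e2 : A0 = B := KF_star_coset_eq KF hA0 hB hgb
      exact congrArg Sum.inl (Subtype.ext (e1 ▸ e2))
    · -- l = [A], m = coset T' : impossible since S ≠ S'
      obtain ⟨A0, hA0, g0, rfl⟩ := hS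
      obtain ⟨A1, hA1, g1, rfl⟩ := hS'
      have hne : g0 • (KF.star A0 : Set K) ≠ g1 • (KF.star A1 : Set K) := by
        intro h
        exact hpq (congrArg (fun z => Sum.inr (Sum.inl z)) (Subtype.ext h))
      exact absurd (KF_coset_line_star_unique KF hT' hA0 hA1 rfl rfl
        (hpm : T'val ⊆ g0 • (KF.star A0 : Set K))
        (hqm : T'val ⊆ g1 • (KF.star A1 : Set K))) hne
    · obtain ⟨A0, hA0, g0, rfl⟩ := hS
      obtain ⟨A1, hA1, g1, rfl⟩ := hS'
      have hne : g0 • (KF.star A0 : Set K) ≠ g1 • (KF.star A1 : Set K) := by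
        intro h
        exact hpq (congrArg (fun z => Sum.inr (Sum.inl z)) (Subtype.ext h))
      exact absurd (KF_coset_line_star_unique KF hT hA0 hA1 rfl rfl
        (hpl : Tval ⊆ g0 • (KF.star A0 : Set K))
        (hql : Tval ⊆ g1 • (KF.star A1 : Set K))) hne
    · obtain ⟨A0, hA0, g0, rfl⟩ := hS
      obtain ⟨A1, hA1, g1, rfl⟩ := hS'
      have hne : g0 • (KF.star A0 : Set K) ≠ g1 • (KF.star A1 : Set K) := by
        intro h
        exact hpq (congrArg (fun z => Sum.inr (Sum.inl z)) (Subtype.ext h))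
      exact absurd (KF_coset_line_star_unique KF hT hA0 hA1 rfl rfl
        (hpl : Tval ⊆ g0 • (KF.star A0 : Set K))
        (hql : Tval ⊆ g1 • (KF.star A1 : Set K))) hne
    -- p = S, q = y
    · exact ((hql : False)).elim
    · exact ((hql : False)).elim
    · exact ((hqm : False)).elim
    · obtain ⟨A0, hA0, g0, rfl⟩ := hS
      have e1 := KF_coset_line_eq KF hT hA0
        (hpl : Tval ⊆ g0 • (KF.star A0 : Set K)) (hql : y ∈ Tval)
      have e2 := KF_coset_line_eq KF hT' hA0
        (hpm : T'val ⊆ g0 • (KF.star A0 : Set K)) (hqm : y ∈ T'val)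
      exact congrArg Sum.inr (Subtype.ext (e1.1.trans e2.1.symm))
    -- p = x, q = ∞
    · exact ((hpl : False)).elim
    · exact ((hpl : False)).elim
    · exact ((hql : False)).elim
    · exact ((hql : False)).elim
    -- p = x, q = S'
    · exact ((hpl : False)).elim
    · exact ((hpl : False)).elim
    · exact ((hpm : False)).elim
    · obtain ⟨A1, hA1, g1, rfl⟩ := hS'
      have e1 := KF_coset_line_eq KF hT hA1
        (hql : Tval ⊆ g1 • (KF.star A1 : Set K)) (hpl : x ∈ Tval)
      have e2 := KF_coset_line_eq KF hT' hA1
        (hqm : T'val ⊆ g1 • (KF.star A1 : Set K)) (hpm : x ∈ T'val)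
      exact congrArg Sum.inr (Subtype.ext (e1.1.trans e2.1.symm))
    -- p = x, q = y
    · exact ((hpl : False)).elim
    · exact ((hpl : False)).elim
    · exact ((hpm : False)).elim
    · obtain ⟨C, hC, hh, rfl⟩ := hT
      obtain ⟨C', hC', hh', rfl⟩ := hT'
      have hxy : x ≠ y := by
        intro h
        exact hpq (by rw [h])
      have hzC : x⁻¹ * y ∈ C := by
        have h1 := (mem_leftCoset_iff hh).1 (hpl : x ∈ hh • (C : Set K))
        have h2 := (mem_leftCoset_iff hh).1 (hql : y ∈ hh • (C : Set K))
        have e : (hh⁻¹ * x)⁻¹ * (hh⁻¹ * y) = x⁻¹ * y := by group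
        exact e ▸ mul_mem (inv_mem h1) h2
      have hzC' : x⁻¹ * y ∈ C' := by
        have h1 := (mem_leftCoset_iff hh').1 (hpm : x ∈ hh' • (C' : Set K))
        have h2 := (mem_leftCoset_iff hh').1 (hqm : y ∈ hh' • (C' : Set K))
        have e : (hh'⁻¹ * x)⁻¹ * (hh'⁻¹ * y) = x⁻¹ * y := by group
        exact e ▸ mul_mem (inv_mem h1) h2
      have hz1 : x⁻¹ * y ≠ 1 := by
        intro h
        exact hxy ((inv_mul_eq_one.mp h))
      have hCC' : C = C' := KF_mem_inter_eq KF hC hC' hzC hzC' hz1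
      subst hCC'
      refine congrArg Sum.inr (Subtype.ext ?_)
      show hh • (C : Set K) = hh' • (C : Set K)
      rw [coset_eq_of_mem (hpl : x ∈ hh • (C : Set K)),
        coset_eq_of_mem (hpm : x ∈ hh' • (C : Set K))]
  · -- the GQ axiom
    rintro (⟨⟩ | (⟨Sval, hS⟩ | x)) (⟨A, hA⟩ | ⟨Tval, hT⟩) hnpl
    · -- p = ∞, l = [A] : incident, contradiction
      exact absurd trivial hnpl
    · -- p = ∞, l = coset h • A
      obtain ⟨A, hA, h, rfl⟩ := hT
      refine ⟨(Sum.inr (Sum.inl ⟨h • (KF.star A : Set K), A, hA, h, rfl⟩), Sum.inl ⟨A, hA⟩),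
        ⟨coset_sub_star_self KF hA h, trivial, ⟨h, rfl⟩⟩, ?_⟩
      rintro ⟨(⟨⟩ | (⟨S'val, hS'⟩ | y)), (⟨B, hB⟩ | ⟨T'val, hT'⟩)⟩ ⟨h1, h2, h3⟩
      · exact ((h1 : False)).elim
      · exact ((h1 : False)).elim
      · -- q' = S', m' = [B]
        obtain ⟨g', hg'⟩ := (h3 : ∃ g' : K, S'val = g' • (KF.star B : Set K))
        have h1' : h • (A : Set K) ⊆ g' • (KF.star B : Set K) := by
          rw [← hg']; exact h1
        obtain ⟨rfl, -, e2⟩ := KF_coset_subset_star KF hA hB h1'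
        rw [Prod.mk.injEq]
        refine ⟨congrArg Sum.inr (congrArg Sum.inl (Subtype.ext ?_)), rfl⟩
        rw [hg', e2]
      · exact ((h2 : False)).elim
      · exact ((h3 : False)).elim
      · exact ((h2 : False)).elim
    · -- p = S = g • A0*, l = [A]
      obtain ⟨A0, hA0, g, rfl⟩ := hS
      refine ⟨(Sum.inl (), Sum.inl ⟨A0, hA0⟩), ⟨trivial, ⟨g, rfl⟩, trivial⟩, ?_⟩
      rintro ⟨(⟨⟩ | (⟨S'val, hS'⟩ | y)), (⟨C, hC⟩ | ⟨T'val, hT'⟩)⟩ ⟨h1, h2, h3⟩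
      · -- q' = ∞, m' = [C]
        obtain ⟨g2, hg2⟩ :=
          (h2 : ∃ g2 : K, g • (KF.star A0 : Set K) = g2 • (KF.star C : Set K))
        have e : A0 = C := KF_star_coset_eq KF hA0 hC hg2
        subst e
        rfl
      · exact ((h3 : False)).elim
      · -- q' = S', m' = [C] : contradiction with non-incidence
        exfalso
        obtain ⟨gb, hgb⟩ := (h1 : ∃ gb : K, S'val = gb • (KF.star A : Set K))
        obtain ⟨gc, hgc⟩ :=
          (h2 : ∃ gc : K, g • (KF.star A0 : Set K) = gc • (KF.star C : Set K))
        obtain ⟨gd, hgd⟩ := (h3 : ∃ gd : K, S'val = gd • (KF.star C : Set K))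
        have e1 : A0 = C := KF_star_coset_eq KF hA0 hC hgc
        have e2 : A = C := KF_star_coset_eq KF hA hC (hgb.symm.trans hgd)
        refine hnpl ⟨g, ?_⟩
        show g • (KF.star A0 : Set K) = g • (KF.star A : Set K)
        rw [e1, ← e2]
      · -- q' = S', m' = coset T' : contradiction with non-incidence
        exfalso
        obtain ⟨gb, hgb⟩ := (h1 : ∃ gb : K, S'val = gb • (KF.star A : Set K))
        obtain ⟨C2, hC2, hc, rfl⟩ := hT'
        have e1 : C2 = A0 := (KF_coset_subset_star KF hC2 hA0
          (h2 : hc • (C2 : Set K) ⊆ g • (KF.star A0 : Set K))).1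
        have e2 : C2 = A := (KF_coset_subset_star KF hC2 hA (by
          rw [← hgb]; exact (h3 : hc • (C2 : Set K) ⊆ S'val))).1
        have e3 : A0 = A := e1 ▸ e2
        refine hnpl ⟨g, ?_⟩
        show g • (KF.star A0 : Set K) = g • (KF.star A : Set K)
        rw [e3]
      · exact ((h3 : False)).elim
      · exact ((h1 : False)).elim
    · -- p = S = g • A0*, l = coset h • B
      obtain ⟨A0, hA0, g, rfl⟩ := hS
      obtain ⟨B, hB, h, rfl⟩ := hT
      by_cases hBA : B = A0
      · subst hBA
        have hgA : h ∉ g • (KF.star B : Set K) := by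
          intro hmem
          exact hnpl (coset_sub_star_of_mem KF hB hmem)
        refine ⟨(Sum.inr (Sum.inl ⟨h • (KF.star B : Set K), B, hB, h, rfl⟩), Sum.inl ⟨B, hB⟩),
          ⟨coset_sub_star_self KF hB h, ⟨g, rfl⟩, ⟨h, rfl⟩⟩, ?_⟩
        rintro ⟨(⟨⟩ | (⟨S'val, hS'⟩ | y)), (⟨C, hC⟩ | ⟨T'val, hT'⟩)⟩ ⟨h1, h2, h3⟩
        · exact ((h1 : False)).elim
        · exact ((h1 : False)).elim
        · -- q' = S', m' = [C]
          obtain ⟨g2, hg2⟩ :=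
            (h2 : ∃ g2 : K, g • (KF.star B : Set K) = g2 • (KF.star C : Set K))
          have eC : B = C := KF_star_coset_eq KF hB hC hg2
          subst eC
          obtain ⟨g3, hg3⟩ := (h3 : ∃ g3 : K, S'val = g3 • (KF.star B : Set K))
          have h1' : h • (B : Set K) ⊆ g3 • (KF.star B : Set K) := by rw [← hg3]; exact h1
          obtain ⟨-, -, e2⟩ := KF_coset_subset_star KF hB hB h1'
          rw [Prod.mk.injEq]
          refine ⟨congrArg Sum.inr (congrArg Sum.inl (Subtype.ext ?_)), rfl⟩
          show S'val = h • (KF.star B : Set K)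
          have hg3' : S'val = g3 • (KF.star B : Set K) := hg3
          rw [hg3', e2]
        · -- q' = S', m' = coset T' : impossible
          exfalso
          obtain ⟨A3, hA3, g3, rfl⟩ := hS'
          obtain ⟨eBA3, -, e4⟩ := KF_coset_subset_star KF hB hA3
            (h1 : h • (B : Set K) ⊆ g3 • (KF.star A3 : Set K))
          subst eBA3
          obtain ⟨C2, hC2, hc, rfl⟩ := hT'
          obtain ⟨eC2, hcmem, -⟩ := KF_coset_subset_star KF hC2 hB
            (h2 : hc • (C2 : Set K) ⊆ g • (KF.star B : Set K))
          obtain ⟨-, hcmem3, -⟩ := KF_coset_subset_star KF hC2 hB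
            (h3 : hc • (C2 : Set K) ⊆ g3 • (KF.star B : Set K))
          have e5 : g • (KF.star B : Set K) = hc • (KF.star B : Set K) := coset_eq_of_mem hcmem
          have e6 : g3 • (KF.star B : Set K) = hc • (KF.star B : Set K) :=
            coset_eq_of_mem hcmem3
          apply hgA
          rw [e5, ← e6, e4]
          exact self_mem_coset (KF.star B) h
        · exact ((h3 : False)).elim
        · -- q' = y, m' = coset T' : impossible
          exfalso
          obtain ⟨e1, e2⟩ := KF_coset_line_eq KF hT' hB
            (h2 : T'val ⊆ g • (KF.star B : Set K)) (h3 : y ∈ T'val)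
          apply hnpl
          show h • (B : Set K) ⊆ g • (KF.star B : Set K)
          rw [coset_eq_of_mem (h1 : y ∈ h • (B : Set K))]
          exact coset_sub_star_of_mem KF hB e2
      · -- B ≠ A0
        obtain ⟨b, hb, s, hs, hw⟩ := KF_decomp KF hA0 hB hBA (h⁻¹ * g)
        have hg : g = h * (b * s) := by rw [← hw]; group
        have hx1 : h * b ∈ h • (B : Set K) := (mem_leftCoset_iff h).2 (by simpa using hb)
        have hx2 : h * b ∈ g • (KF.star A0 : Set K) := by
          refine (mem_leftCoset_iff g).2 ?_
          have e : g⁻¹ * (h * b) = s⁻¹ := by rw [hg]; group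
          rw [e]
          exact inv_mem hs
        refine ⟨(Sum.inr (Sum.inr (h * b)),
            Sum.inr ⟨(h * b) • (A0 : Set K), A0, hA0, h * b, rfl⟩),
          ⟨hx1, coset_sub_star_of_mem KF hA0 hx2, self_mem_coset A0 (h * b)⟩, ?_⟩
        rintro ⟨(⟨⟩ | (⟨S'val, hS'⟩ | y)), (⟨C, hC⟩ | ⟨T'val, hT'⟩)⟩ ⟨h1, h2, h3⟩
        · exact ((h1 : False)).elim
        · exact ((h1 : False)).elim
        · -- q' = S', m' = [C] : impossible
          exfalso
          obtain ⟨A3, hA3, g3, rfl⟩ := hS'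
          obtain ⟨eBA3, -, -⟩ := KF_coset_subset_star KF hB hA3
            (h1 : h • (B : Set K) ⊆ g3 • (KF.star A3 : Set K))
          obtain ⟨gc, hgc⟩ :=
            (h2 : ∃ gc : K, g • (KF.star A0 : Set K) = gc • (KF.star C : Set K))
          obtain ⟨gd, hgd⟩ :=
            (h3 : ∃ gd : K, g3 • (KF.star A3 : Set K) = gd • (KF.star C : Set K))
          have e1 : A0 = C := KF_star_coset_eq KF hA0 hC hgc
          have e2 : A3 = C := KF_star_coset_eq KF hA3 hC hgd
          exact hBA (by rw [eBA3, e2, ← e1])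
        · -- q' = S', m' = coset T' : impossible
          exfalso
          obtain ⟨A3, hA3, g3, rfl⟩ := hS'
          obtain ⟨eBA3, -, -⟩ := KF_coset_subset_star KF hB hA3
            (h1 : h • (B : Set K) ⊆ g3 • (KF.star A3 : Set K))
          obtain ⟨C2, hC2, hc, rfl⟩ := hT'
          have e1 : C2 = A0 := (KF_coset_subset_star KF hC2 hA0
            (h2 : hc • (C2 : Set K) ⊆ g • (KF.star A0 : Set K))).1
          have e2 : C2 = A3 := (KF_coset_subset_star KF hC2 hA3
            (h3 : hc • (C2 : Set K) ⊆ g3 • (KF.star A3 : Set K))).1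
          exact hBA (by rw [eBA3, ← e2, e1])
        · exact ((h3 : False)).elim
        · -- q' = y, m' = coset T'
          obtain ⟨e1, e2⟩ := KF_coset_line_eq KF hT' hA0
            (h2 : T'val ⊆ g • (KF.star A0 : Set K)) (h3 : y ∈ T'val)
          have hy : y = h * b := KF_inter_star_unique KF hA0 hB hBA
            (h1 : y ∈ h • (B : Set K)) e2 hx1 hx2
          rw [Prod.mk.injEq]
          refine ⟨congrArg Sum.inr (congrArg Sum.inr hy), congrArg Sum.inr (Subtype.ext ?_)⟩
          show T'val = (h * b) • (A0 : Set K)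
          rw [e1, hy]
    · -- p = x, l = [A]
      refine ⟨(Sum.inr (Sum.inl ⟨x • (KF.star A : Set K), A, hA, x, rfl⟩),
          Sum.inr ⟨x • (A : Set K), A, hA, x, rfl⟩),
        ⟨⟨x, rfl⟩, self_mem_coset A x, coset_sub_star_self KF hA x⟩, ?_⟩
      rintro ⟨(⟨⟩ | (⟨S'val, hS'⟩ | y)), (⟨C, hC⟩ | ⟨T'val, hT'⟩)⟩ ⟨h1, h2, h3⟩
      · exact ((h2 : False)).elim
      · exact ((h3 : False)).elim
      · exact ((h2 : False)).elim
      · -- q' = S', m' = coset T'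
        obtain ⟨g2, hg2⟩ := (h1 : ∃ g2 : K, S'val = g2 • (KF.star A : Set K))
        have h3' : T'val ⊆ g2 • (KF.star A : Set K) := by
          rw [← hg2]; exact (h3 : T'val ⊆ S'val)
        obtain ⟨e1, e2⟩ := KF_coset_line_eq KF hT' hA h3' (h2 : x ∈ T'val)
        rw [Prod.mk.injEq]
        constructor
        · refine congrArg Sum.inr (congrArg Sum.inl (Subtype.ext ?_))
          rw [hg2, coset_eq_of_mem e2]
        · exact congrArg Sum.inr (Subtype.ext e1)
      · exact ((h3 : False)).elim
      · exact ((h1 : False)).elim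
    · -- p = x, l = coset h • B
      obtain ⟨B, hB, h, rfl⟩ := hT
      have hnx : x ∉ h • (B : Set K) := hnpl
      by_cases hxB : x ∈ h • (KF.star B : Set K)
      · refine ⟨(Sum.inr (Sum.inl ⟨h • (KF.star B : Set K), B, hB, h, rfl⟩),
            Sum.inr ⟨x • (B : Set K), B, hB, x, rfl⟩),
          ⟨coset_sub_star_self KF hB h, self_mem_coset B x,
            coset_sub_star_of_mem KF hB hxB⟩, ?_⟩
        rintro ⟨(⟨⟩ | (⟨S'val, hS'⟩ | y)), (⟨C, hC⟩ | ⟨T'val, hT'⟩)⟩ ⟨h1, h2, h3⟩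
        · exact ((h1 : False)).elim
        · exact ((h1 : False)).elim
        · exact ((h2 : False)).elim
        · -- q' = S', m' = coset T'
          obtain ⟨A3, hA3, g3, rfl⟩ := hS'
          obtain ⟨eBA3, -, e4⟩ := KF_coset_subset_star KF hB hA3
            (h1 : h • (B : Set K) ⊆ g3 • (KF.star A3 : Set K))
          subst eBA3
          obtain ⟨e1, e2⟩ := KF_coset_line_eq KF hT' hB
            (h3 : T'val ⊆ g3 • (KF.star B : Set K)) (h2 : x ∈ T'val)
          rw [Prod.mk.injEq]
          constructor
          · refine congrArg Sum.inr (congrArg Sum.inl (Subtype.ext ?_))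
            show g3 • (KF.star B : Set K) = h • (KF.star B : Set K)
            exact e4
          · exact congrArg Sum.inr (Subtype.ext e1)
        · exact ((h3 : False)).elim
        · -- q' = y, m' = coset T' : impossible
          exfalso
          obtain ⟨C2, hC2, hc, rfl⟩ := hT'
          have hz1 : x⁻¹ * y ∈ C2 := by
            have a1 := (mem_leftCoset_iff hc).1 (h2 : x ∈ hc • (C2 : Set K))
            have a2 := (mem_leftCoset_iff hc).1 (h3 : y ∈ hc • (C2 : Set K))
            have e : (hc⁻¹ * x)⁻¹ * (hc⁻¹ * y) = x⁻¹ * y := by group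
            exact e ▸ mul_mem (inv_mem a1) a2
          have hz2 : x⁻¹ * y ∈ KF.star B := by
            have a1 := (mem_leftCoset_iff h).1 hxB
            have a2 : h⁻¹ * y ∈ KF.star B :=
              KF.le_star B hB ((mem_leftCoset_iff h).1 (h1 : y ∈ h • (B : Set K)))
            have e : (h⁻¹ * x)⁻¹ * (h⁻¹ * y) = x⁻¹ * y := by group
            exact e ▸ mul_mem (inv_mem a1) a2
          have hzne : x⁻¹ * y ≠ 1 := by
            intro hz
            exact hnx (inv_mul_eq_one.mp hz ▸ (h1 : y ∈ h • (B : Set K)))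
          have hC2B : C2 = B := by
            by_contra hne
            exact hzne (KF.inter_star C2 hC2 B hB hne _ hz1 hz2)
          have hyx : y ∈ x • (B : Set K) := (mem_leftCoset_iff x).2 (by
            have := hC2B ▸ hz1
            simpa using this)
          apply hnx
          rw [coset_eq_of_mem (h1 : y ∈ h • (B : Set K)), ← coset_eq_of_mem hyx]
          exact self_mem_coset B x
      · -- x ∉ h • B*
        have hwB : x⁻¹ * h ∉ KF.star B := by
          intro hcon
          apply hxB
          refine (mem_leftCoset_iff h).2 ?_
          have := inv_mem hcon
          simpa [mul_inv_rev] using this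
        obtain ⟨C, hC, b, hbB, hwbC⟩ := KF_cover_exists KF hB hwB
        have hy1 : h * b ∈ h • (B : Set K) := (mem_leftCoset_iff h).2 (by simpa using hbB)
        have hy2 : x⁻¹ * (h * b) ∈ C := by
          have e : x⁻¹ * (h * b) = (x⁻¹ * h) * b := by group
          rw [e]; exact hwbC
        refine ⟨(Sum.inr (Sum.inr (h * b)), Sum.inr ⟨x • (C : Set K), C, hC, x, rfl⟩),
          ⟨hy1, self_mem_coset C x, (mem_leftCoset_iff x).2 hy2⟩, ?_⟩
        rintro ⟨(⟨⟩ | (⟨S'val, hS'⟩ | y)), (⟨C2, hC2⟩ | ⟨T'val, hT'⟩)⟩ ⟨h1, h2, h3⟩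
        · exact ((h1 : False)).elim
        · exact ((h1 : False)).elim
        · exact ((h2 : False)).elim
        · -- q' = S', m' = coset T' : impossible
          exfalso
          obtain ⟨A3, hA3, g3, rfl⟩ := hS'
          obtain ⟨eBA3, -, e4⟩ := KF_coset_subset_star KF hB hA3
            (h1 : h • (B : Set K) ⊆ g3 • (KF.star A3 : Set K))
          subst eBA3
          obtain ⟨-, e2⟩ := KF_coset_line_eq KF hT' hB
            (h3 : T'val ⊆ g3 • (KF.star B : Set K)) (h2 : x ∈ T'val)
          apply hxB
          rw [← e4]
          exact e2
        · exact ((h3 : False)).elim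
        · -- q' = y, m' = coset T'
          obtain ⟨C3, hC3, hc, rfl⟩ := hT'
          have hT'x : hc • (C3 : Set K) = x • (C3 : Set K) :=
            coset_eq_of_mem (h2 : x ∈ hc • (C3 : Set K))
          have hz1 : x⁻¹ * y ∈ C3 := by
            have a1 := (mem_leftCoset_iff hc).1 (h2 : x ∈ hc • (C3 : Set K))
            have a2 := (mem_leftCoset_iff hc).1 (h3 : y ∈ hc • (C3 : Set K))
            have e : (hc⁻¹ * x)⁻¹ * (hc⁻¹ * y) = x⁻¹ * y := by group
            exact e ▸ mul_mem (inv_mem a1) a2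
          have hb2 : h⁻¹ * y ∈ B := (mem_leftCoset_iff h).1 (h1 : y ∈ h • (B : Set K))
          have hwb2 : (x⁻¹ * h) * (h⁻¹ * y) ∈ C3 := by
            have e : (x⁻¹ * h) * (h⁻¹ * y) = x⁻¹ * y := by group
            rw [e]; exact hz1
          obtain ⟨eC, eb⟩ := KF_cover_unique KF hB hwB hC hC3 hbB hb2 hwbC hwb2
          have hy : y = h * b := by
            rw [eb]
            group
          subst eC
          rw [Prod.mk.injEq]
          refine ⟨congrArg Sum.inr (congrArg Sum.inr hy), ?_⟩
          refine congrArg Sum.inr (Subtype.ext ?_)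
          show hc • (C : Set K) = x • (C : Set K)
          exact hT'x
end

section
/- Let K be a finite group with a Kantor family (F, F*) of type (t,t) such that there is a central subgroup S ≤ Z(K) of order t with A* = A·S and A ∩ S = {1} for all A ∈ F, K/S is abelian, and every A ∈ F has exponent dividing 2. Then the set of squares {g² : g ∈ K} equals the commutator subgroup [K,K], and this subgroup has exponent dividing 2. -/
open scoped Pointwise

lemma KFcover {K : Type*} [Group K] [Fintype K] {t : ℕ} (KF : KantorFamily K t t)
    (S : Subgroup K) (hcard : Nat.card S = t)
    (hstar : ∀ A ∈ KF.F, (KF.star A : Set K) = (A : Set K) * (S : Set K)) :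
    ∀ g : K, ∃ A ∈ KF.F, ∃ a ∈ A, ∃ s ∈ S, g = a * s := by
  classical
  set SF : Finset K := Set.toFinset (S : Set K) with hSF
  have hmemSF : ∀ x : K, x ∈ SF ↔ x ∈ S := by intro x; simp [hSF]
  have hcardSF : SF.card = t := by
    rw [hSF, Set.toFinset_card, ← Nat.card_eq_fintype_card, SetLike.coe_sort_coe, hcard]
  set f : Subgroup K → Finset K := fun A => Set.toFinset (KF.star A : Set K) \ SF with hf
  have hmemf : ∀ A (x : K), x ∈ f A ↔ (x ∈ KF.star A ∧ x ∉ S) := by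
    intro A x; simp [hf, hmemSF]
  -- S is inside each star A
  have hSsub : ∀ A ∈ KF.F, ∀ s : K, s ∈ S → s ∈ KF.star A := by
    intro A hA s hs
    have : s ∈ (A : Set K) * (S : Set K) := ⟨1, A.one_mem, s, hs, one_mul s⟩
    rw [← hstar A hA] at this
    exact this
  -- membership in star A gives decomposition
  have hdec : ∀ A ∈ KF.F, ∀ x : K, x ∈ KF.star A → ∃ a ∈ A, ∃ s ∈ S, x = a * s := by
    intro A hA x hx
    have : x ∈ (A : Set K) * (S : Set K) := by rw [← hstar A hA]; exact hx
    obtain ⟨a, ha, s, hs, h⟩ := this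
    exact ⟨a, ha, s, hs, h.symm⟩
  have hcardf : ∀ A ∈ KF.F, (f A).card = t * t - t := by
    intro A hA
    have hsub : SF ⊆ Set.toFinset (KF.star A : Set K) := by
      intro x hx
      rw [Set.mem_toFinset]
      exact hSsub A hA x ((hmemSF x).mp hx)
    rw [hf]
    rw [Finset.card_sdiff_of_subset hsub, hcardSF, Set.toFinset_card, ← Nat.card_eq_fintype_card,
      SetLike.coe_sort_coe, KF.card_star A hA]
  have hdisj : ∀ A ∈ KF.F, ∀ B ∈ KF.F, A ≠ B → Disjoint (f A) (f B) := by
    intro A hA B hB hAB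
    rw [Finset.disjoint_left]
    intro x hxA hxB
    obtain ⟨hxA', hxS⟩ := (hmemf A x).mp hxA
    obtain ⟨hxB', _⟩ := (hmemf B x).mp hxB
    obtain ⟨a, ha, s, hs, rfl⟩ := hdec A hA x hxA'
    have haB : a ∈ KF.star B := by
      obtain ⟨b, hb, s', hs', h⟩ := hdec B hB _ hxB'
      have : a = b * (s' * s⁻¹) := by
        have : a * s = b * s' := h
        calc a = (a * s) * s⁻¹ := by group
        _ = (b * s') * s⁻¹ := by rw [this]
        _ = b * (s' * s⁻¹) := by group
      rw [this]
      have : b * (s' * s⁻¹) ∈ (B : Set K) * (S : Set K) :=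
        ⟨b, hb, s' * s⁻¹, mul_mem hs' (inv_mem hs), rfl⟩
      rw [← hstar B hB] at this
      exact this
    have := KF.inter_star A hA B hB hAB a ha haB
    rw [this, one_mul] at hxS
    exact hxS hs
  have hdisj2 : Disjoint (KF.F.biUnion f) SF := by
    rw [Finset.disjoint_left]
    intro x hx hxS
    obtain ⟨A, hA, hxA⟩ := Finset.mem_biUnion.mp hx
    exact ((hmemf A x).mp hxA).2 ((hmemSF x).mp hxS)
  have hunion : KF.F.biUnion f ∪ SF = Finset.univ := by
    apply Finset.eq_univ_of_card
    rw [Finset.card_union_of_disjoint hdisj2, Finset.card_biUnion hdisj,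
      Finset.sum_const_nat hcardf, KF.card_F, hcardSF, KF.card_K]
    obtain ⟨u, rfl⟩ : ∃ u, t = u + 2 := ⟨t - 2, by have := KF.two_le_u; omega⟩
    have h1 : (u+2)*(u+2) - (u+2) = (u+2)*(u+1) := by
      have : (u+2)*(u+2) = (u+2)*(u+1) + (u+2) := by ring
      omega
    rw [h1]; ring
  intro g
  have hg : g ∈ KF.F.biUnion f ∪ SF := hunion ▸ Finset.mem_univ g
  rcases Finset.mem_union.mp hg with h | h
  · obtain ⟨A, hA, hxA⟩ := Finset.mem_biUnion.mp h
    obtain ⟨a, ha, s, hs, h⟩ := hdec A hA g ((hmemf A g).mp hxA).1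
    exact ⟨A, hA, a, ha, s, hs, h⟩
  · have hFne : KF.F.Nonempty := Finset.card_pos.mp (by rw [KF.card_F]; omega)
    obtain ⟨A, hA⟩ := hFne
    exact ⟨A, hA, 1, A.one_mem, g, (hmemSF g).mp h, (one_mul g).symm⟩

lemma KFgen {K : Type*} [Group K] [Fintype K] {t : ℕ} (KF : KantorFamily K t t)
    {B₀ : Subgroup K} (hB₀ : B₀ ∈ KF.F) :
    Subgroup.closure (⋃ D ∈ KF.F, (D : Set K)) = ⊤ := by
  classical
  set H : Subgroup K := Subgroup.closure (⋃ D ∈ KF.F, (D : Set K)) with hH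
  have hmemH : ∀ D ∈ KF.F, ∀ x : K, x ∈ D → x ∈ H := by
    intro D hD x hx
    exact Subgroup.subset_closure (Set.mem_iUnion₂.mpr ⟨D, hD, hx⟩)
  -- trivial intersection of distinct members
  have hint : ∀ D ∈ KF.F, ∀ E ∈ KF.F, D ≠ E → ∀ x : K, x ∈ D → x ∈ E → x = 1 := by
    intro D hD E hE hDE x hxD hxE
    exact KF.inter_star D hD E hE hDE x hxD (KF.le_star E hE hxE)
  set Bf : Finset K := Set.toFinset (B₀ : Set K) with hBf
  have hmemBf : ∀ x : K, x ∈ Bf ↔ x ∈ B₀ := by intro x; simp [hBf]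
  have hcardBf : Bf.card = t := by
    rw [hBf, Set.toFinset_card, ← Nat.card_eq_fintype_card, SetLike.coe_sort_coe,
      KF.card_mem B₀ hB₀]
  set P : Subgroup K → Finset K :=
    fun D => (((Set.toFinset (D : Set K)).erase 1) ×ˢ Bf).image (fun p => p.1 * p.2) with hP
  have hmemP : ∀ D (x : K), x ∈ P D ↔ ∃ d, (d ∈ D ∧ d ≠ 1) ∧ ∃ b ∈ B₀, d * b = x := by
    intro D x
    simp only [hP, Finset.mem_image, Finset.mem_product, Finset.mem_erase, Set.mem_toFinset,
      SetLike.mem_coe, hmemBf, Prod.exists]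
    constructor
    · rintro ⟨d, b, ⟨⟨hd1, hd⟩, hb⟩, h⟩; exact ⟨d, ⟨hd, hd1⟩, b, hb, h⟩
    · rintro ⟨d, ⟨hd, hd1⟩, b, hb, h⟩; exact ⟨d, b, ⟨⟨hd1, hd⟩, hb⟩, h⟩
  have hcardP : ∀ D ∈ KF.F.erase B₀, (P D).card = (t - 1) * t := by
    intro D hD'
    obtain ⟨hDB, hD⟩ := Finset.mem_erase.mp hD'
    rw [hP]
    rw [Finset.card_image_of_injOn, Finset.card_product, Finset.card_erase_of_mem
      (by rw [Set.mem_toFinset]; exact D.one_mem), Set.toFinset_card,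
      ← Nat.card_eq_fintype_card, SetLike.coe_sort_coe, KF.card_mem D hD, hcardBf]
    · rintro ⟨d, b⟩ hp ⟨d', b'⟩ hq h
      simp only [Finset.coe_product, Set.mem_prod, Finset.mem_coe, Finset.mem_erase,
        Set.mem_toFinset, SetLike.mem_coe, hmemBf] at hp hq
      simp only at h
      have hx : d'⁻¹ * d = b' * b⁻¹ := by
        calc d'⁻¹ * d = d'⁻¹ * (d * b) * b⁻¹ := by group
        _ = d'⁻¹ * (d' * b') * b⁻¹ := by rw [h]
        _ = b' * b⁻¹ := by group
      have hxB : d'⁻¹ * d ∈ B₀ := by rw [hx]; exact mul_mem hq.2 (inv_mem hp.2)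
      have hxD : d'⁻¹ * d ∈ D := mul_mem (inv_mem hq.1.2) hp.1.2
      have h1 : d'⁻¹ * d = 1 := hint D hD B₀ hB₀ hDB _ hxD hxB
      have hd : d = d' := by
        have : d' * (d'⁻¹ * d) = d' * 1 := by rw [h1]
        simpa [mul_assoc] using this
      have hb : b = b' := by
        subst hd
        exact mul_left_cancel h
      simp [hd, hb]
  have hPdisj : ∀ D ∈ KF.F.erase B₀, ∀ E ∈ KF.F.erase B₀, D ≠ E → Disjoint (P D) (P E) := by
    intro D hD' E hE' hDE
    obtain ⟨hDB, hD⟩ := Finset.mem_erase.mp hD'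
    obtain ⟨hEB, hE⟩ := Finset.mem_erase.mp hE'
    rw [Finset.disjoint_left]
    intro x hxD hxE
    obtain ⟨d, ⟨hd, hd1⟩, b, hb, hdb⟩ := (hmemP D x).mp hxD
    obtain ⟨e, ⟨he, he1⟩, b', hb', heb⟩ := (hmemP E x).mp hxE
    have hx : e⁻¹ * d = b' * b⁻¹ := by
      calc e⁻¹ * d = e⁻¹ * (d * b) * b⁻¹ := by group
      _ = e⁻¹ * (e * b') * b⁻¹ := by rw [hdb, heb]
      _ = b' * b⁻¹ := by group
    have hxB : e⁻¹ * d ∈ B₀ := by rw [hx]; exact mul_mem hb' (inv_mem hb)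
    have h1 : e⁻¹ * d = 1 := KF.prod_inter E hE D hD B₀ hB₀ (Ne.symm hDE) hDB hEB
      (e⁻¹ * d) ⟨e⁻¹, inv_mem he, d, hd, rfl⟩ hxB
    have hde : d = e := by
      have : e * (e⁻¹ * d) = e * 1 := by rw [h1]
      simpa [mul_assoc] using this
    subst hde
    exact hd1 (hint D hD E hE hDE d hd he)
  have hPB : Disjoint ((KF.F.erase B₀).biUnion P) Bf := by
    rw [Finset.disjoint_left]
    intro x hx hxB
    obtain ⟨D, hD', hxP⟩ := Finset.mem_biUnion.mp hx
    obtain ⟨hDB, hD⟩ := Finset.mem_erase.mp hD'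
    obtain ⟨d, ⟨hd, hd1⟩, b, hb, hdb⟩ := (hmemP D x).mp hxP
    have hdB : d ∈ B₀ := by
      have : d = x * b⁻¹ := by rw [← hdb]; group
      rw [this]
      exact mul_mem ((hmemBf x).mp hxB) (inv_mem hb)
    exact hd1 (hint D hD B₀ hB₀ hDB d hd hdB)
  -- the union is contained in (the finset of) H
  set U : Finset K := ((KF.F.erase B₀).biUnion P) ∪ Bf with hU
  have hUH : U ⊆ Set.toFinset (H : Set K) := by
    intro x hx
    rw [Set.mem_toFinset]
    rcases Finset.mem_union.mp hx with h | h
    · obtain ⟨D, hD', hxP⟩ := Finset.mem_biUnion.mp h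
      obtain ⟨_, hD⟩ := Finset.mem_erase.mp hD'
      obtain ⟨d, ⟨hd, _⟩, b, hb, hdb⟩ := (hmemP D x).mp hxP
      rw [← hdb]
      exact mul_mem (hmemH D hD d hd) (hmemH B₀ hB₀ b hb)
    · exact hmemH B₀ hB₀ x ((hmemBf x).mp h)
  have hcardU : U.card = t * ((t - 1) * t) + t := by
    rw [hU, Finset.card_union_of_disjoint hPB, Finset.card_biUnion hPdisj,
      Finset.sum_const_nat hcardP, Finset.card_erase_of_mem hB₀, KF.card_F, hcardBf]
    simp
  -- cardinality of H
  have hHcard : Nat.card H = (Set.toFinset (H : Set K)).card := by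
    rw [Set.toFinset_card, ← Nat.card_eq_fintype_card, SetLike.coe_sort_coe]
  have hHge : t * ((t - 1) * t) + t ≤ Nat.card H := by
    rw [hHcard, ← hcardU]
    exact Finset.card_le_card hUH
  have hdvd : Nat.card H ∣ t ^ 2 * t := by
    have h := Subgroup.card_subgroup_dvd_card H
    rwa [show Nat.card K = t ^ 2 * t from by rw [Nat.card_eq_fintype_card, KF.card_K]] at h
  have hcardH : Nat.card H = t ^ 2 * t := by
    obtain ⟨k, hk⟩ := hdvd
    obtain ⟨u, rfl⟩ : ∃ u, t = u + 2 := ⟨t - 2, by have := KF.two_le_u; omega⟩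
    have h2 : u + 2 - 1 = u + 1 := by omega
    rw [h2] at hHge
    rcases Nat.lt_or_ge k 2 with hk2 | hk2
    · interval_cases k
      · simp at hk
      · omega
    · exfalso
      have hle : Nat.card H * 2 ≤ Nat.card H * k := Nat.mul_le_mul_left _ hk2
      rw [← hk] at hle
      nlinarith [hHge, hle]
  rw [hH] at hcardH ⊢
  exact Subgroup.eq_top_of_card_eq _ (by rw [hcardH, Nat.card_eq_fintype_card, KF.card_K])

/-- If a Kantor family of type `(t,t)` has a central subgroup `S` of order `t`
with `A* = A·S`, `A ∩ S = 1` for all `A ∈ F`, `K/S` abelian, and all members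
of `F` of exponent dividing 2, then the set of squares of `K` equals the
commutator subgroup `[K,K]`, and this subgroup has exponent dividing 2. -/
theorem squares_eq_commutator_subgroup
    {K : Type*} [Group K] [Fintype K] {t : ℕ} (KF : KantorFamily K t t)
    (S : Subgroup K) (hZ : S ≤ Subgroup.center K) (hcard : Nat.card S = t)
    (hstar : ∀ A ∈ KF.F, (KF.star A : Set K) = (A : Set K) * (S : Set K))
    (hinter : ∀ A ∈ KF.F, A ⊓ S = ⊥)
    (hab : ∀ g h : K, g⁻¹ * h⁻¹ * g * h ∈ S)
    (hexp : ∀ A ∈ KF.F, ∀ x ∈ A, x ^ 2 = 1) :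
    {x : K | ∃ g : K, x = g ^ 2} = (commutator K : Set K) ∧
      (∀ x ∈ commutator K, x ^ 2 = 1) := by
  classical
  -- every square is the square of an element of S
  have hsq : ∀ g : K, ∃ s ∈ S, g ^ 2 = s ^ 2 := by
    intro g
    obtain ⟨A, hA, a, ha, s, hs, rfl⟩ := KFcover KF S hcard hstar g
    have ha2 : a ^ 2 = 1 := hexp A hA a ha
    refine ⟨s, hs, ?_⟩
    have hcs : ∀ x : K, s * x = x * s := fun x => (Subgroup.mem_center_iff.mp (hZ hs) x).symm
    calc (a * s) ^ 2 = a * (s * a) * s := by rw [pow_two]; group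
    _ = a * (a * s) * s := by rw [hcs a]
    _ = a ^ 2 * s ^ 2 := by rw [pow_two, pow_two]; group
    _ = s ^ 2 := by rw [ha2, one_mul]
  have hsqS : ∀ g : K, g ^ 2 ∈ S := by
    intro g; obtain ⟨s, hs, h⟩ := hsq g; rw [h]; exact pow_mem hs 2
  have hsqC : ∀ g x : K, g ^ 2 * x = x * g ^ 2 := fun g x =>
    ((Subgroup.mem_center_iff.mp (hZ (hsqS g))) x).symm
  -- the subgroup of squares of S
  set T : Subgroup K :=
    { carrier := {x : K | ∃ s ∈ S, x = s ^ 2}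
      one_mem' := ⟨1, S.one_mem, (one_pow 2).symm⟩
      mul_mem' := by
        rintro x y ⟨s, hs, rfl⟩ ⟨s', hs', rfl⟩
        refine ⟨s * s', mul_mem hs hs', ?_⟩
        have hc : Commute s s' := (Subgroup.mem_center_iff.mp (hZ hs') s)
        rw [hc.mul_pow]
      inv_mem' := by
        rintro x ⟨s, hs, rfl⟩
        exact ⟨s⁻¹, inv_mem hs, by rw [inv_pow]⟩ } with hT
  have hmemT : ∀ x : K, x ∈ T ↔ ∃ s ∈ S, x = s ^ 2 := fun x => Iff.rfl
  have hTsq : ∀ g : K, g ^ 2 ∈ T := fun g => hsq g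
  haveI hTn : T.Normal := by
    constructor
    rintro x ⟨s, hs, rfl⟩ g
    have hc : g * s ^ 2 * g⁻¹ = s ^ 2 := by rw [← hsqC s g]; group
    rw [hc]; exact ⟨s, hs, rfl⟩
  -- commutator K ≤ T
  have hCT : commutator K ≤ T := by
    rw [commutator_def, Subgroup.commutator_le]
    intro g _ h _
    set π := QuotientGroup.mk' T with hπ
    have hker : ∀ x : K, π x = 1 ↔ x ∈ T := by
      intro x; rw [← MonoidHom.mem_ker, QuotientGroup.ker_mk']
    have h1 : (π g) ^ 2 = 1 := by rw [← map_pow]; exact (hker _).mpr (hTsq g)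
    have h2 : (π h) ^ 2 = 1 := by rw [← map_pow]; exact (hker _).mpr (hTsq h)
    have h3 : (π g * π h) ^ 2 = 1 := by
      rw [← map_mul, ← map_pow]; exact (hker _).mpr (hTsq (g * h))
    have hinvg : (π g)⁻¹ = π g := by
      rw [pow_two] at h1; exact inv_eq_of_mul_eq_one_right h1
    have hinvh : (π h)⁻¹ = π h := by
      rw [pow_two] at h2; exact inv_eq_of_mul_eq_one_right h2
    refine (hker _).mp ?_
    rw [map_commutatorElement, commutatorElement_def, hinvg, hinvh]
    calc π g * π h * π g * π h = (π g * π h) ^ 2 := by rw [pow_two]; group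
    _ = 1 := h3
  -- every square is in the commutator subgroup
  have hsub2 : ∀ g : K, g ^ 2 ∈ commutator K := by
    have hFne : KF.F.Nonempty := Finset.card_pos.mp (by rw [KF.card_F]; omega)
    obtain ⟨B₀, hB₀⟩ := hFne
    have hEtop : Subgroup.closure (⋃ D ∈ KF.F, (D : Set K)) = ⊤ := KFgen KF hB₀
    have hEsq : ∀ x ∈ ⋃ D ∈ KF.F, (D : Set K), x ^ 2 = 1 := by
      intro x hx
      obtain ⟨D, hD, hxD⟩ := Set.mem_iUnion₂.mp hx
      exact hexp D hD x hxD
    have key : ∀ x : K, (Abelianization.of x) ^ 2 = 1 := by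
      intro x
      have hx : x ∈ Subgroup.closure (⋃ D ∈ KF.F, (D : Set K)) := hEtop ▸ Subgroup.mem_top x
      induction hx using Subgroup.closure_induction with
      | mem y hy => rw [← map_pow, hEsq y hy, map_one]
      | one => rw [map_one, one_pow]
      | mul y z hy hz ihy ihz => rw [map_mul, mul_pow, ihy, ihz, one_mul]
      | inv y hy ihy => rw [map_inv, inv_pow, ihy, inv_one]
    intro g
    have : Abelianization.of (g ^ 2) = 1 := by rw [map_pow]; exact key g
    exact (QuotientGroup.eq_one_iff (g ^ 2)).mp this
  -- commutators square to 1
  have hcomm_sq : ∀ g h : K, (g * h * g⁻¹ * h⁻¹) ^ 2 = 1 := by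
    intro g h
    set c := g * h * g⁻¹ * h⁻¹ with hc
    have hcS : c ∈ S := by
      have := hab g⁻¹ h⁻¹
      simpa [hc] using this
    have hcc : ∀ x : K, c * x = x * c := fun x => (Subgroup.mem_center_iff.mp (hZ hcS) x).symm
    have h1 : g * h = c * (h * g) := by rw [hc]; group
    have e1 : g * (g * h) = g * (c * (h * g)) := by rw [← h1]
    have e2 : g * (c * (h * g)) = c * (g * (h * g)) := by
      rw [← mul_assoc, ← hcc g, mul_assoc]
    have e3 : g * (h * g) = c * (h * (g * g)) := by
      rw [← mul_assoc, h1]; group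
    have e7 : g * (g * h) = c * (c * (h * (g * g))) := by rw [e1, e2, e3]
    have e5 : g * (g * h) = h * (g * g) := by
      have h5 := hsqC g h
      rw [pow_two] at h5
      rw [← mul_assoc]; exact h5
    have e8 : c * (c * (h * (g * g))) = h * (g * g) := e7.symm.trans e5
    have e9 : (c * c) * (h * (g * g)) = 1 * (h * (g * g)) := by
      rw [mul_assoc, e8, one_mul]
    have : c * c = 1 := mul_right_cancel e9
    rw [pow_two]; exact this
  refine ⟨?_, ?_⟩
  · ext x
    simp only [Set.mem_setOf_eq, SetLike.mem_coe]
    constructor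
    · rintro ⟨g, rfl⟩; exact hsub2 g
    · intro hx
      obtain ⟨s, hs, rfl⟩ := (hmemT x).mp (hCT hx)
      exact ⟨s, rfl⟩
  · intro x hx
    rw [commutator_eq_closure] at hx
    have : x ∈ S ∧ x ^ 2 = 1 := by
      induction hx using Subgroup.closure_induction with
      | mem y hy =>
        obtain ⟨g, h, rfl⟩ := hy
        constructor
        · rw [commutatorElement_def]
          have := hab g⁻¹ h⁻¹
          simpa using this
        · rw [commutatorElement_def]; exact hcomm_sq g h
      | one => exact ⟨S.one_mem, one_pow 2⟩
      | mul y z hy hz ihy ihz =>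
        refine ⟨mul_mem ihy.1 ihz.1, ?_⟩
        have hcyz : Commute y z := (Subgroup.mem_center_iff.mp (hZ ihz.1) y)
        rw [hcyz.mul_pow, ihy.2, ihz.2, one_mul]
      | inv y hy ihy => exact ⟨inv_mem ihy.1, by rw [inv_pow, ihy.2, inv_one]⟩
    exact this.2
end
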